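/- arXiv:2511.10525 — 5 statements merged into one kernel-verified Lean document; each statement's English description precedes it below -/
import Mathlib

section
/- Fix integers n ≥ N ≥ 2 and a real number q > 0. Let r_j and Y_N(z) on (ℂⁿ)^{⊗N} be as follows: r(e_x ⊗ e_y) = e_x ⊗ e_y if x = y; q⁻¹ e_y ⊗ e_x if x < y; q⁻¹ e_y ⊗ e_x + (1 − q⁻²) e_x ⊗ e_y if x > y; r_j acts as r on factors j, j+1; S_m(z) = 1 + z r_m + z² r_{m−1} r_m + ⋯ + z^m r_1 ⋯ r_m; Y_N(z) = S_{N−1}(z) ⋯ S_1(z). Then for any strictly increasing indices 1 ≤ i_1 < i_2 < ⋯ < i_N ≤ n and any z ∈ ℂ, Y_N(z)(e_{i_1} ⊗ e_{i_2} ⊗ ⋯ ⊗ e_{i_N}) = Σ_{σ ∈ S_N} (z q⁻¹)^{inv(σ)} e_{i_{σ(1)}} ⊗ e_{i_{σ(2)}} ⊗ ⋯ ⊗ e_{i_{σ(N)}}, where inv(σ) = #{(k,l) : k < l, σ(k) > σ(l)} is the number of inversions of σ. In particular Y_N(z) applied to an ordered basis state with distinct entries produces all N! permutations of that state. -/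
/-!
Write `c = z q⁻¹`. If the letter at position `m` of a word `w` exceeds all letters before it,
each `r_j` in `r_{m-t+1} ⋯ r_m` meets an ascent and acts on it as `q⁻¹` times the adjacent swap,
so the `t`-th term of `S_m(z)` sends `e_w` to `c^t e_{w'}`, where `w'` is `w` with that letter
moved `t` places to the left; this creates exactly `t` new inversions. Every permutation of the
first `m + 1` positions factors uniquely as such a move after a permutation of the first `m`
positions, so by induction `S_m(z) ⋯ S_1(z) e_i` is the sum of `c^{inv σ} e_{i ∘ σ}` over the
permutations `σ` of the first `m + 1` positions.
-/

open Finset Matrix Kronecker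

noncomputable section

def rMat (n : ℕ) (q : ℝ) : Matrix (Fin n × Fin n) (Fin n × Fin n) ℂ := fun out inp =>
  if inp.1 = inp.2 then (if out = inp then 1 else 0)
  else (if out = (inp.2, inp.1) then ((q : ℂ))⁻¹ else 0) +
    (if inp.2 < inp.1 ∧ out = inp then 1 - ((q : ℂ))⁻¹ ^ 2 else 0)

/-- The operator `r_j` acting as `rMat` on tensor factors `j, j+1` (0-indexed)
of `(ℂⁿ)^{⊗N}` and as the identity elsewhere. -/
def rop (n N : ℕ) (q : ℝ) (j : ℕ) : Matrix (Fin N → Fin n) (Fin N → Fin n) ℂ :=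
  fun f g =>
    if hj : j + 1 < N then
      rMat n q (f ⟨j, Nat.lt_of_succ_lt hj⟩, f ⟨j + 1, hj⟩)
          (g ⟨j, Nat.lt_of_succ_lt hj⟩, g ⟨j + 1, hj⟩) *
        (if ∀ k : Fin N, k.1 ≠ j → k.1 ≠ j + 1 → f k = g k then 1 else 0)
    else if f = g then 1 else 0

/-- `r_{m-t+1} ⋯ r_m` (math 1-indexed), i.e. `rop (m-t) * ⋯ * rop (m-1)`. -/
def prodChain (n N : ℕ) (q : ℝ) (m : ℕ) : ℕ → Matrix (Fin N → Fin n) (Fin N → Fin n) ℂ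
  | 0 => 1
  | t + 1 => rop n N q (m - (t + 1)) * prodChain n N q m t

/-- `S_m(z) = 1 + z r_m + z² r_{m-1} r_m + ⋯ + z^m r_1 ⋯ r_m`. -/
def Smat (n N : ℕ) (q : ℝ) (m : ℕ) (z : ℂ) : Matrix (Fin N → Fin n) (Fin N → Fin n) ℂ :=
  ∑ t ∈ Finset.range (m + 1), z ^ t • prodChain n N q m t

def Yaux (n N : ℕ) (q : ℝ) (z : ℂ) : ℕ → Matrix (Fin N → Fin n) (Fin N → Fin n) ℂ
  | 0 => 1
  | m + 1 => Smat n N q (m + 1) z * Yaux n N q z m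

/-- The shuffle operator `Y_N(z) = S_{N-1}(z) S_{N-2}(z) ⋯ S_1(z)`. -/
def Ymat (n N : ℕ) (q : ℝ) (z : ℂ) : Matrix (Fin N → Fin n) (Fin N → Fin n) ℂ :=
  Yaux n N q z (N - 1)

/-- Tensor product `A 0 ⊗ A 1 ⊗ ⋯ ⊗ A (N-1)` of a family of `n × n` matrices. -/
def tensorFam {n N : ℕ} (A : Fin N → Matrix (Fin n) (Fin n) ℂ) :
    Matrix (Fin N → Fin n) (Fin N → Fin n) ℂ := fun f g => ∏ k, A k (f k) (g k)

def Kmat (n : ℕ) (q : ℝ) (j : ℕ) : Matrix (Fin n) (Fin n) ℂ :=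
  Matrix.diagonal fun i => if i.1 = j then (Real.sqrt q : ℂ)
    else if i.1 = j + 1 then ((Real.sqrt q : ℂ))⁻¹ else 1

def KmatInv (n : ℕ) (q : ℝ) (j : ℕ) : Matrix (Fin n) (Fin n) ℂ :=
  Matrix.diagonal fun i => if i.1 = j then ((Real.sqrt q : ℂ))⁻¹
    else if i.1 = j + 1 then (Real.sqrt q : ℂ) else 1

/-- `E_j = Σ_k (K_j⁻¹)^{⊗(k-1)} ⊗ e_{j+1,j} ⊗ K_j^{⊗(N-k)}` (0-indexed `j`). -/
def Eop (n N : ℕ) (q : ℝ) (j : ℕ) (hj : j + 1 < n) :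
    Matrix (Fin N → Fin n) (Fin N → Fin n) ℂ :=
  ∑ k : Fin N, tensorFam fun m =>
    if m.1 < k.1 then KmatInv n q j
    else if m = k then Matrix.single ⟨j + 1, hj⟩ ⟨j, Nat.lt_of_succ_lt hj⟩ 1
    else Kmat n q j

def Fop (n N : ℕ) (q : ℝ) (j : ℕ) (hj : j + 1 < n) :
    Matrix (Fin N → Fin n) (Fin N → Fin n) ℂ :=
  ∑ k : Fin N, tensorFam fun m =>
    if m.1 < k.1 then KmatInv n q j
    else if m = k then Matrix.single ⟨j, Nat.lt_of_succ_lt hj⟩ ⟨j + 1, hj⟩ 1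
    else Kmat n q j

/-- `q^{𝓔_i} = (q^{e_{i,i}})^{⊗N}`. -/
def qEop (n N : ℕ) (q : ℝ) (i : Fin n) : Matrix (Fin N → Fin n) (Fin N → Fin n) ℂ :=
  tensorFam fun _ => Matrix.diagonal fun a => if a = i then (q : ℂ) else 1

/-- number of letters `i` in the word `w`. -/
def content {n N : ℕ} (w : Fin N → Fin n) (i : Fin n) : ℕ :=
  (Finset.univ.filter fun k => w k = i).card

/-- number of inversions of the word `w`. -/
def invw {n N : ℕ} (w : Fin N → Fin n) : ℕ :=
  (Finset.univ.filter fun p : Fin N × Fin N => p.1 < p.2 ∧ w p.2 < w p.1).card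

/-- the (unnormalized) q-Dicke state `b⁰_{k₁…k_n}`. -/
def bstate (n N : ℕ) (q : ℝ) (k : Fin n → ℕ) : (Fin N → Fin n) → ℂ :=
  ∑ w ∈ Finset.univ.filter (fun w : Fin N → Fin n => ∀ i, content w i = k i),
    ((q : ℂ) ^ invw w) • (Pi.single w 1 : (Fin N → Fin n) → ℂ)


/-- The number of inversions `inv(σ) = #{(k,l) : k < l, σ(k) > σ(l)}` of a permutation. -/
def permInv {N : ℕ} (σ : Equiv.Perm (Fin N)) : ℕ :=
  (Finset.univ.filter fun p : Fin N × Fin N => p.1 < p.2 ∧ σ p.2 < σ p.1).card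

theorem adjacent_swap_lt_swap_iff {N : ℕ} {a b : Fin N} (hab : a.1 + 1 = b.1) {k l : Fin N}
    (hab' : (k, l) ≠ (a, b)) (hba : (k, l) ≠ (b, a)) :
    Equiv.swap a b k < Equiv.swap a b l ↔ k < l := by
  simp only [Equiv.swap_apply_def]
  simp only [ne_eq, Prod.ext_iff, Fin.ext_iff] at hab' hba
  split_ifs <;> simp only [Fin.lt_def, Fin.ext_iff] at * <;> omega

/- Swapping an adjacent ascent `a, b` of `w` creates the inversion `(a, b)` and permutes
all the others. -/
theorem invw_comp_swap {n N : ℕ} (w : Fin N → Fin n) {a b : Fin N} (hab : a.1 + 1 = b.1)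
    (hw : w a < w b) : invw (w ∘ Equiv.swap a b) = invw w + 1 := by
  set s := Equiv.swap a b
  set I := univ.filter fun p : Fin N × Fin N => p.1 < p.2 ∧ w p.2 < w p.1
  have hlt : a < b := by rw [Fin.lt_def]; omega
  have hinv : (univ.filter fun p : Fin N × Fin N => p.1 < p.2 ∧ w (s p.2) < w (s p.1)) =
      insert (a, b) (I.map (Equiv.prodCongr s s).toEmbedding) := by
    ext ⟨k, l⟩
    simp only [I, mem_insert, mem_map_equiv, mem_filter, mem_univ, true_and,
      Equiv.prodCongr_symm, Equiv.symm_swap, Equiv.prodCongr_apply, Prod.map, s]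
    by_cases h1 : (k, l) = (a, b)
    · obtain ⟨rfl, rfl⟩ := Prod.ext_iff.mp h1
      simp [hlt, hw]
    by_cases h2 : (k, l) = (b, a)
    · obtain ⟨rfl, rfl⟩ := Prod.ext_iff.mp h2
      simp [hlt.asymm, hlt.ne, hw.asymm]
    simp [h1, adjacent_swap_lt_swap_iff hab h1 h2]
  have hnot : (a, b) ∉ I.map (Equiv.prodCongr s s).toEmbedding := by
    simp [I, s, hlt.asymm]
  rw [invw, invw, Function.comp_def, hinv, card_insert_of_notMem hnot, card_map]

theorem eq_comp_swap_iff {α β : Type*} [DecidableEq α] (f g : α → β) (a b : α) :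
    f = g ∘ Equiv.swap a b ↔
      f a = g b ∧ f b = g a ∧ ∀ k, k ≠ a → k ≠ b → f k = g k := by
  constructor
  · rintro rfl
    exact ⟨by simp, by simp, fun k hka hkb => by simp [Equiv.swap_apply_of_ne_of_ne hka hkb]⟩
  · rintro ⟨ha, hb, hk⟩
    funext k
    rcases eq_or_ne k a with rfl | hka
    · simpa using ha
    rcases eq_or_ne k b with rfl | hkb
    · simpa using hb
    simpa [Equiv.swap_apply_of_ne_of_ne hka hkb] using hk k hka hkb

theorem rop_mulVec_single_of_lt {n N : ℕ} (q : ℝ) {j : ℕ} (hj : j + 1 < N)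
    (g : Fin N → Fin n) (hg : g ⟨j, by omega⟩ < g ⟨j + 1, hj⟩) :
    rop n N q j *ᵥ Pi.single g 1 =
      (q : ℂ)⁻¹ • Pi.single (g ∘ Equiv.swap ⟨j, by omega⟩ ⟨j + 1, hj⟩) 1 := by
  ext f
  simp only [mulVec_single_one, col_apply, rop, dif_pos hj, rMat, hg.ne, hg.not_gt, false_and,
    if_false, add_zero, Pi.smul_apply, Pi.single_apply, smul_eq_mul, mul_ite, mul_one, mul_zero,
    ← ite_and]
  refine if_congr ?_ rfl rfl
  rw [eq_comp_swap_iff, Prod.mk.injEq]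
  simp only [ne_eq, Fin.ext_iff]
  tauto

/- `w ∘ insertPerm m t` is `w` with its letter at position `m` moved to position `m - t`,
the letters in between shifted one step to the right: the word produced by `r_{m-t+1} ⋯ r_m`
(1-indexed). -/
def insertPerm {N : ℕ} (m : Fin N) : ℕ → Equiv.Perm (Fin N)
  | 0 => 1
  | t + 1 => insertPerm m t * Equiv.swap ⟨m - (t + 1), by omega⟩ ⟨m - t, by omega⟩

section insertPerm

variable {N : ℕ} (m : Fin N)

theorem insertPerm_apply_of_lt {t : ℕ} {k : Fin N} (hk : k.1 < m - t) :
    insertPerm m t k = k := by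
  induction t with
  | zero => rfl
  | succ t ih =>
    rw [insertPerm, Equiv.Perm.mul_apply, Equiv.swap_apply_of_ne_of_ne, ih (by omega)] <;>
      simp only [ne_eq, Fin.ext_iff] <;> omega

theorem insertPerm_apply_of_gt (t : ℕ) {k : Fin N} (hk : m < k) : insertPerm m t k = k := by
  rw [Fin.lt_def] at hk
  induction t with
  | zero => rfl
  | succ t ih =>
    rw [insertPerm, Equiv.Perm.mul_apply, Equiv.swap_apply_of_ne_of_ne, ih] <;>
      simp only [ne_eq, Fin.ext_iff] <;> omega

theorem insertPerm_apply_sub {t : ℕ} (ht : t ≤ m) :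
    insertPerm m t ⟨m - t, by omega⟩ = m := by
  induction t with
  | zero => rfl
  | succ t ih => rw [insertPerm, Equiv.Perm.mul_apply, Equiv.swap_apply_left, ih (by omega)]

theorem insertPerm_inv_apply_self {t : ℕ} (ht : t ≤ m) :
    (insertPerm m t)⁻¹ m = ⟨m - t, by omega⟩ :=
  Equiv.Perm.inv_eq_iff_eq.mpr (insertPerm_apply_sub m ht).symm

end insertPerm

theorem prodChain_mulVec_single {n N : ℕ} (q : ℝ) (m : Fin N) (w : Fin N → Fin n)
    (hw : ∀ k < m, w k < w m) {t : ℕ} (ht : t ≤ m) :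
    prodChain n N q m t *ᵥ Pi.single w 1 =
      (q : ℂ)⁻¹ ^ t • Pi.single (w ∘ insertPerm m t) 1 := by
  induction t with
  | zero => rw [prodChain, one_mulVec, pow_zero, one_smul]; rfl
  | succ t ih =>
    have hj : m - (t + 1) + 1 < N := by omega
    have hb : (⟨m - (t + 1) + 1, hj⟩ : Fin N) = ⟨m - t, by omega⟩ := Fin.ext (by simp; omega)
    have hasc : (w ∘ insertPerm m t) ⟨m - (t + 1), by omega⟩ <
        (w ∘ insertPerm m t) ⟨m - (t + 1) + 1, hj⟩ := by
      rw [hb, Function.comp_apply, Function.comp_apply, insertPerm_apply_sub m (by omega),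
        insertPerm_apply_of_lt m (by simp; omega)]
      exact hw _ (by rw [Fin.lt_def]; simp; omega)
    rw [prodChain, ← mulVec_mulVec, ih (by omega), mulVec_smul,
      rop_mulVec_single_of_lt q hj _ hasc, smul_smul, ← pow_succ, hb]
    rfl

theorem Smat_mulVec_single {n N : ℕ} (q : ℝ) (z : ℂ) (m : Fin N) (w : Fin N → Fin n)
    (hw : ∀ k < m, w k < w m) :
    Smat n N q m z *ᵥ Pi.single w 1 =
      ∑ t ∈ range (m + 1), (z * (q : ℂ)⁻¹) ^ t • Pi.single (w ∘ insertPerm m t) 1 := by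
  rw [Smat, sum_mulVec]
  refine sum_congr rfl fun t ht => ?_
  rw [smul_mulVec, prodChain_mulVec_single q m w hw (by simpa [Nat.lt_succ_iff] using ht),
    smul_smul, mul_pow]

def permsBelow (N m : ℕ) : Finset (Equiv.Perm (Fin N)) :=
  univ.filter fun σ => ∀ k : Fin N, m ≤ k.1 → σ k = k

section permsBelow

variable {N : ℕ} {σ : Equiv.Perm (Fin N)}

theorem apply_lt_of_mem_permsBelow {m : ℕ} (hσ : σ ∈ permsBelow N m) {k : Fin N} (hk : k.1 < m) :
    (σ k).1 < m := by
  rw [permsBelow, mem_filter] at hσ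
  by_contra h
  have := σ.injective (hσ.2 (σ k) (not_lt.mp h))
  omega

theorem inv_mem_permsBelow {m : ℕ} (hσ : σ ∈ permsBelow N m) : σ⁻¹ ∈ permsBelow N m := by
  simp only [permsBelow, mem_filter, mem_univ, true_and] at hσ ⊢
  exact fun k hk => Equiv.Perm.inv_eq_iff_eq.mpr (hσ k hk).symm

theorem permsBelow_one : permsBelow N 1 = {1} := by
  ext σ
  refine ⟨fun hσ => ?_, fun hσ => by simp_all [permsBelow]⟩
  rw [mem_singleton]
  ext k
  by_cases hk : k.1 < 1
  · have := apply_lt_of_mem_permsBelow hσ hk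
    simp only [Equiv.Perm.coe_one, id_eq]
    omega
  · rw [permsBelow, mem_filter] at hσ
    simp [hσ.2 k (by omega)]

theorem permsBelow_of_le {m : ℕ} (h : N ≤ m) : permsBelow N m = univ :=
  filter_true_of_mem fun _ _ k hk => absurd k.2 (by omega)

theorem mul_insertPerm_mem_permsBelow {m : Fin N} (hσ : σ ∈ permsBelow N m) (t : ℕ) :
    σ * insertPerm m t ∈ permsBelow N (m + 1) := by
  simp only [permsBelow, mem_filter, mem_univ, true_and] at hσ ⊢
  intro k hk
  rw [Equiv.Perm.mul_apply, insertPerm_apply_of_gt m t (by rw [Fin.lt_def]; omega),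
    hσ k (by omega)]

theorem permInv_one : permInv (1 : Equiv.Perm (Fin N)) = 0 :=
  card_eq_zero.mpr (filter_eq_empty_iff.mpr fun _ _ h => h.1.asymm h.2)

theorem permInv_mul_insertPerm (m : Fin N) (hσ : σ ∈ permsBelow N m) {t : ℕ} (ht : t ≤ m) :
    permInv (σ * insertPerm m t) = permInv σ + t := by
  induction t with
  | zero => rfl
  | succ t ih =>
    have hasc : (σ * insertPerm m t) ⟨m - (t + 1), by omega⟩ <
        (σ * insertPerm m t) ⟨m - t, by omega⟩ := by
      rw [Equiv.Perm.mul_apply, Equiv.Perm.mul_apply, insertPerm_apply_sub m (by omega),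
        insertPerm_apply_of_lt m (by simp; omega), (mem_filter.mp hσ).2 m le_rfl, Fin.lt_def]
      exact apply_lt_of_mem_permsBelow hσ (by simp; omega)
    rw [insertPerm, ← mul_assoc]
    show invw _ = _
    rw [Equiv.Perm.coe_mul, invw_comp_swap _ (by simp; omega) hasc, ← add_assoc,
      ← ih (by omega)]
    rfl

/- Lehmer-code step: `(σ, t) ↦ σ * insertPerm m t` is a bijection, whose inverse reads `t`
off from `ρ⁻¹ m = m - t`. -/
theorem sum_permsBelow_succ {β : Type*} [AddCommMonoid β] (m : Fin N)
    (f : Equiv.Perm (Fin N) → β) :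
    ∑ ρ ∈ permsBelow N (m + 1), f ρ =
      ∑ σ ∈ permsBelow N m, ∑ t ∈ range (m + 1), f (σ * insertPerm m t) := by
  rw [← sum_product']
  symm
  refine sum_nbij' (fun p => p.1 * insertPerm m p.2)
    (fun ρ => (ρ * (insertPerm m (m - (ρ⁻¹ m).1))⁻¹, m - (ρ⁻¹ m).1)) ?_ ?_ ?_ ?_
    (fun _ _ => rfl)
  · rintro ⟨σ, t⟩ hp
    exact mul_insertPerm_mem_permsBelow (mem_product.mp hp).1 t
  · intro ρ hρ
    have hρm : (ρ⁻¹ m).1 < m + 1 :=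
      apply_lt_of_mem_permsBelow (inv_mem_permsBelow hρ) (by omega)
    rw [mem_product, mem_range]
    refine ⟨?_, by omega⟩
    simp only [permsBelow, mem_filter, mem_univ, true_and] at hρ ⊢
    intro k hk
    rcases hk.lt_or_eq with hk | hk
    · rw [Equiv.Perm.mul_apply, Equiv.Perm.inv_eq_iff_eq.mpr
        (insertPerm_apply_of_gt m _ (by rw [Fin.lt_def]; omega)).symm, hρ k (by omega)]
    · obtain rfl : k = m := Fin.ext hk.symm
      have hpos : (⟨k - (k - (ρ⁻¹ k).1), by omega⟩ : Fin N) = ρ⁻¹ k :=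
        Fin.ext (Nat.sub_sub_self (by omega))
      rw [Equiv.Perm.mul_apply, insertPerm_inv_apply_self k (by omega), hpos]
      exact ρ.apply_symm_apply k
  · rintro ⟨σ, t⟩ hp
    rw [mem_product, mem_range] at hp
    have hinv : ((σ * insertPerm m t)⁻¹ m).1 = m - t := by
      rw [_root_.mul_inv_rev, Equiv.Perm.mul_apply,
        Equiv.Perm.inv_eq_iff_eq.mpr ((mem_filter.mp hp.1).2 m le_rfl).symm,
        insertPerm_inv_apply_self m (by omega)]
    have ht : m - ((σ * insertPerm m t)⁻¹ m).1 = t := by omega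
    simp only [ht, mul_inv_cancel_right]
  · intro ρ _
    simp only [inv_mul_cancel_right]

end permsBelow

theorem Yaux_mulVec_single {n N : ℕ} (q : ℝ) (z : ℂ) {i : Fin N → Fin n} (hi : StrictMono i)
    {M : ℕ} (hM : M ≤ N - 1) :
    Yaux n N q z M *ᵥ Pi.single i 1 =
      ∑ σ ∈ permsBelow N (M + 1),
        (z * (q : ℂ)⁻¹) ^ permInv σ • Pi.single (fun k => i (σ k)) 1 := by
  induction M with
  | zero =>
    rw [Yaux, one_mulVec, permsBelow_one, sum_singleton, permInv_one, pow_zero, one_smul]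
    rfl
  | succ M ih =>
    set m : Fin N := ⟨M + 1, by omega⟩
    rw [Yaux, ← mulVec_mulVec, ih (by omega), mulVec_sum, sum_permsBelow_succ m]
    refine sum_congr rfl fun σ hσ => ?_
    have hw : ∀ k < m, i (σ k) < i (σ m) := fun k hk => by
      rw [(mem_filter.mp hσ).2 m le_rfl]
      exact hi (apply_lt_of_mem_permsBelow hσ hk)
    rw [mulVec_smul, Smat_mulVec_single q z m _ hw, smul_sum]
    refine sum_congr rfl fun t ht => ?_
    rw [smul_smul, ← pow_add,
      permInv_mul_insertPerm m hσ (Nat.lt_succ_iff.mp (mem_range.mp ht))]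
    rfl

theorem stmt5_general (n N : ℕ) (q : ℝ)
    (i : Fin N → Fin n) (hi : StrictMono i) (z : ℂ) :
    (Ymat n N q z).mulVec (Pi.single i 1) =
      ∑ σ : Equiv.Perm (Fin N),
        ((z * ((q : ℂ))⁻¹) ^ permInv σ) •
          (Pi.single (fun k => i (σ k)) 1 : (Fin N → Fin n) → ℂ) := by
  rw [Ymat, Yaux_mulVec_single q z hi le_rfl, permsBelow_of_le (by omega)]

/-- applied to an ordered basis state `e_{i₁} ⊗ ⋯ ⊗ e_{i_N}` with strictly
increasing indices, the shuffle operator produces all `N!` permutations, weighted by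
`(z q⁻¹)^{inv(σ)}`. -/
theorem stmt5 (n N : ℕ) (hN : 2 ≤ N) (hn : N ≤ n) (q : ℝ) (hq : 0 < q)
    (i : Fin N → Fin n) (hi : StrictMono i) (z : ℂ) :
    (Ymat n N q z).mulVec (Pi.single i 1) =
      ∑ σ : Equiv.Perm (Fin N),
        ((z * ((q : ℂ))⁻¹) ^ permInv σ) •
          (Pi.single (fun k => i (σ k)) 1 : (Fin N → Fin n) → ℂ) :=
  stmt5_general n N q i hi z

end
end

section
/- Fix integers n ≥ 2, N ≥ 2 and a real number q > 0, q ≠ 1. Let Y_N(z) on (ℂⁿ)^{⊗N} be the shuffle operator built from the matrices r_j (r(e_x ⊗ e_y) = e_x ⊗ e_y if x = y; q⁻¹ e_y ⊗ e_x if x < y; q⁻¹ e_y ⊗ e_x + (1 − q⁻²) e_x ⊗ e_y if x > y; S_m(z) = 1 + z r_m + ⋯ + z^m r_1 ⋯ r_m; Y_N(z) = S_{N−1}(z) ⋯ S_1(z)). Let w = (w_1,…,w_N) be any word in {1,…,n} and let w↑ be its weakly increasing rearrangement, with inv(w) = #{(k,l) : k < l, w_k > w_l}. Then Y_N(q²)(e_{w_1}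 ⊗ ⋯ ⊗ e_{w_N}) = q^{inv(w)} · Y_N(q²)(e_{w↑_1} ⊗ ⋯ ⊗ e_{w↑_N}), and Y_N(−1)(e_{w_1} ⊗ ⋯ ⊗ e_{w_N}) = (−q⁻¹)^{inv(w)} · Y_N(−1)(e_{w↑_1} ⊗ ⋯ ⊗ e_{w↑_N}). In particular, for x < y, (1 + q² r)(e_y ⊗ e_x) = q (1 + q² r)(e_x ⊗ e_y) and (1 − r)(e_y ⊗ e_x) = −q⁻¹ (1 − r)(e_x ⊗ e_y). -/
/-!
The operators `r_j` satisfy the Hecke relation `r² = (1 - q⁻²) r + q⁻²`, commute when far apart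
and satisfy the braid relation. Together with `S_{m+1}(z) = 1 + z S_m(z) r_m` these give
`Y_N(z) r_j = z q⁻² Y_N(z)` whenever `z² q⁻² = 1 + z (1 - q⁻²)`, i.e. for `z = q²` and `z = -1`.
If `u_j < u_{j+1}` then `r_j e_u = q⁻¹ e_{s_j u}`, so undoing a descent of `w` multiplies
`Y_N(z) e_w` by `q · z q⁻²`, which is `q` for `z = q²` and `-q⁻¹` for `z = -1`; each such step
removes one inversion, and a word without inversions is its sorted rearrangement. The two-site
identities are the same computation for `1 + z r` in place of `Y_N(z)`.
-/

open Finset Matrix Kronecker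

noncomputable section

section QuadraticRelation

variable {K M : Type*} [CommRing K] [Ring M] [Algebra K M]

theorem one_add_smul_mul_eq_smul_of_quadratic {a b z : K} {R : M}
    (hR : R * R = a • R + b • 1) (hz : z ^ 2 * b = 1 + z * a) :
    (1 + z • R) * R = (z * b) • (1 + z • R) := by
  rw [add_mul, one_mul, smul_mul_assoc, hR]
  match_scalars <;> first | ring1 | linear_combination -hz

/-- The inductive step for `S_{m+1} S_m r_m = (z * b) • S_{m+1} S_m`, read with `S = S_m`,
`S' = S_{m+1}`, `R = r_m`, `R' = r_{m+1}`. -/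
theorem one_add_smul_mul_mul_eq_smul_of_braid {a b z : K} {R R' S S' : M}
    (hR' : R' * R' = a • R' + b • 1) (hz : z ^ 2 * b = 1 + z * a)
    (hS' : S' = 1 + z • (S * R)) (hbraid : R * R' * R = R' * R * R') (hcomm : R' * S = S * R')
    (hS'S : S' * S * R = (z * b) • (S' * S)) :
    (1 + z • (S' * R')) * S' * R' = (z * b) • ((1 + z • (S' * R')) * S') := by
  have hzSR : z • (S * R) = S' - 1 := by rw [hS', add_sub_cancel_left]
  have hR'S' : R' * S' = R' + z • (S * (R' * R)) := by
    rw [hS', mul_add, mul_one, mul_smul_comm, ← mul_assoc, hcomm, mul_assoc]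
  have hsq : S' * R' * (S' * R') =
      a • (S' * R') + b • S' + (z * b) • (S' * R' * S' - S' * R') :=
    calc S' * R' * (S' * R') = S' * (R' * S') * R' := by simp only [mul_assoc]
      _ = S' * (R' * R') + z • (S' * S * (R' * R * R')) := by
        rw [hR'S', mul_add, add_mul, mul_smul_comm, smul_mul_assoc]; simp only [mul_assoc]
      _ = S' * (R' * R') + z • ((S' * S * R) * (R' * R)) := by
        rw [← hbraid]; simp only [mul_assoc]
      _ = S' * (R' * R') + (z * b) • (S' * R' * (z • (S * R))) := by
        rw [hS'S, smul_mul_assoc, smul_smul, mul_comm z, ← smul_smul, mul_smul_comm,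
          mul_assoc S', ← mul_assoc S, ← hcomm]
        simp only [mul_assoc]
      _ = a • (S' * R') + b • S' + (z * b) • (S' * R' * S' - S' * R') := by
        rw [hzSR, hR', mul_add, mul_smul_comm, mul_smul_comm, mul_one, mul_sub, mul_one]
  calc (1 + z • (S' * R')) * S' * R' = S' * R' + z • (S' * R' * (S' * R')) := by
        rw [add_mul, add_mul, one_mul, smul_mul_assoc, smul_mul_assoc]; simp only [mul_assoc]
    _ = (z * b) • ((1 + z • (S' * R')) * S') := by
        rw [hsq, add_mul, one_mul, smul_mul_assoc]
        match_scalars <;> first | ring1 | linear_combination -hz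

end QuadraticRelation

namespace QShuffle

variable {n N : ℕ}

section HeckeMatrix

variable (q : ℝ)

def rDiag (p : Fin n × Fin n) : ℂ :=
  if p.1 = p.2 then 1 else if p.2 < p.1 then 1 - ((q : ℂ))⁻¹ ^ 2 else 0

def rOff (p : Fin n × Fin n) : ℂ := if p.1 = p.2 then 0 else ((q : ℂ))⁻¹

/-- `e_s ↦ rDiag (π s) • e_s + rOff (π s) • e_{τ s}`. Both `rMat` (`π = id`, `τ = Prod.swap`) and
`rop j` (`π = adjPair`, `τ = adjSwap`) have this shape. -/
def heckeMat {ι : Type*} [DecidableEq ι] (π : ι → Fin n × Fin n) (τ : ι → ι) :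
    Matrix ι ι ℂ := fun t s =>
  rDiag q (π s) * (if t = s then 1 else 0) + rOff q (π s) * (if t = τ s then 1 else 0)

variable {ι : Type*} [Fintype ι] [DecidableEq ι] {π : ι → Fin n × Fin n} {τ : ι → ι}

theorem mul_heckeMat_apply (A : Matrix ι ι ℂ) (p s : ι) :
    (A * heckeMat q π τ) p s = rDiag q (π s) * A p s + rOff q (π s) * A p (τ s) := by
  simp only [mul_apply, heckeMat, mul_add, Finset.sum_add_distrib, mul_ite, mul_one, mul_zero,
    Finset.sum_ite_eq', Finset.mem_univ, if_true]
  ring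

theorem heckeMat_mulVec_single_of_lt {s : ι} (hs : (π s).1 < (π s).2) :
    heckeMat q π τ *ᵥ Pi.single s 1 = ((q : ℂ))⁻¹ • Pi.single (τ s) 1 := by
  have hdiag : rDiag q (π s) = 0 := by simp [rDiag, hs.ne, hs.not_gt]
  have hoff : rOff q (π s) = ((q : ℂ))⁻¹ := by simp [rOff, hs.ne]
  ext t
  simp [heckeMat, hdiag, hoff, Pi.single_apply]

theorem rDiag_sq_add_rOff_mul_rOff_swap (p : Fin n × Fin n) :
    rDiag q p * rDiag q p + rOff q p * rOff q p.swap =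
      (1 - ((q : ℂ))⁻¹ ^ 2) * rDiag q p + ((q : ℂ))⁻¹ ^ 2 := by
  simp only [rDiag, rOff, Prod.fst_swap, Prod.snd_swap, Fin.ext_iff, Fin.lt_def]
  split_ifs <;> first | omega | ring

theorem rDiag_mul_rOff_add_rOff_mul_rDiag_swap (p : Fin n × Fin n) :
    rDiag q p * rOff q p + rOff q p * rDiag q p.swap = (1 - ((q : ℂ))⁻¹ ^ 2) * rOff q p := by
  simp only [rDiag, rOff, Prod.fst_swap, Prod.snd_swap, Fin.ext_iff, Fin.lt_def]
  split_ifs <;> first | omega | ring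

theorem heckeMat_mul_self (hτ : Function.Involutive τ) (hπ : ∀ s, π (τ s) = (π s).swap) :
    heckeMat q π τ * heckeMat q π τ =
      (1 - ((q : ℂ))⁻¹ ^ 2) • heckeMat q π τ + ((q : ℂ))⁻¹ ^ 2 • (1 : Matrix ι ι ℂ) := by
  ext p s
  simp only [mul_heckeMat_apply, heckeMat, hπ, hτ s, Matrix.add_apply, Matrix.smul_apply,
    Matrix.one_apply, smul_eq_mul]
  linear_combination
    rDiag_sq_add_rOff_mul_rOff_swap q (π s) * (if p = s then (1 : ℂ) else 0) +
      rDiag_mul_rOff_add_rOff_mul_rDiag_swap q (π s) * (if p = τ s then (1 : ℂ) else 0)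

theorem rMat_eq_heckeMat : rMat n q = heckeMat q id Prod.swap := by
  ext o ⟨x, y⟩
  rcases lt_trichotomy x y with h | rfl | h
  · simp [rMat, heckeMat, rDiag, rOff, h.ne, h.not_gt]
  · simp [rMat, heckeMat, rDiag, rOff]
  · by_cases ho : o = (x, y) <;> simp [rMat, heckeMat, rDiag, rOff, h.ne', h, ho]

theorem rMat_mul_self :
    rMat n q * rMat n q = (1 - ((q : ℂ))⁻¹ ^ 2) • rMat n q + ((q : ℂ))⁻¹ ^ 2 • 1 := by
  rw [rMat_eq_heckeMat]
  exact heckeMat_mul_self q Prod.swap_swap fun _ => rfl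

end HeckeMatrix

theorem mulVec_single_eq_smul_of_mul_heckeMat {ι : Type*} [Fintype ι] [DecidableEq ι] {q : ℝ}
    {π : ι → Fin n × Fin n} {τ : ι → ι} {A : Matrix ι ι ℂ} {φ : ℂ} (hq : (q : ℂ) ≠ 0)
    (hA : A * heckeMat q π τ = φ • A) {s : ι} (hs : (π s).1 < (π s).2) :
    A *ᵥ Pi.single (τ s) 1 = ((q : ℂ) * φ) • A *ᵥ Pi.single s 1 :=
  calc A *ᵥ Pi.single (τ s) 1 = (q : ℂ) • A *ᵥ (heckeMat q π τ *ᵥ Pi.single s 1) := by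
        rw [heckeMat_mulVec_single_of_lt q hs, mulVec_smul, smul_smul, mul_inv_cancel₀ hq,
          one_smul]
    _ = ((q : ℂ) * φ) • A *ᵥ Pi.single s 1 := by
        rw [mulVec_mulVec, hA, smul_mulVec, smul_smul]

section AdjacentSwap

variable {j : ℕ} (hj : j + 1 < N)

def adjSwap (s : Fin N → Fin n) : Fin N → Fin n :=
  s ∘ Equiv.swap ⟨j, Nat.lt_of_succ_lt hj⟩ ⟨j + 1, hj⟩

def adjPair (s : Fin N → Fin n) : Fin n × Fin n := (s ⟨j, Nat.lt_of_succ_lt hj⟩, s ⟨j + 1, hj⟩)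

@[simp] theorem adjSwap_apply_left (s : Fin N → Fin n) :
    adjSwap hj s ⟨j, Nat.lt_of_succ_lt hj⟩ = s ⟨j + 1, hj⟩ := by
  simp [adjSwap]

@[simp] theorem adjSwap_apply_right (s : Fin N → Fin n) :
    adjSwap hj s ⟨j + 1, hj⟩ = s ⟨j, Nat.lt_of_succ_lt hj⟩ := by
  simp [adjSwap]

theorem adjSwap_apply_of_ne (s : Fin N → Fin n) {k : Fin N} (h₀ : (k : ℕ) ≠ j)
    (h₁ : (k : ℕ) ≠ j + 1) : adjSwap hj s k = s k := by
  rw [adjSwap, Function.comp_apply, Equiv.swap_apply_of_ne_of_ne (Fin.ne_of_val_ne h₀)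
    (Fin.ne_of_val_ne h₁)]

theorem adjSwap_involutive : Function.Involutive (adjSwap (n := n) hj) := fun s => by
  funext k
  simp [adjSwap]

theorem adjPair_adjSwap (s : Fin N → Fin n) : adjPair hj (adjSwap hj s) = (adjPair hj s).swap := by
  simp [adjPair]

theorem eq_iff_adjPair_eq_and_forall (t s : Fin N → Fin n) :
    t = s ↔ adjPair hj t = adjPair hj s ∧
      ∀ k : Fin N, (k : ℕ) ≠ j → (k : ℕ) ≠ j + 1 → t k = s k := by
  refine ⟨by rintro rfl; simp, fun ⟨hp, hk⟩ => funext fun k => ?_⟩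
  simp only [adjPair, Prod.mk.injEq] at hp
  by_cases h₀ : (k : ℕ) = j
  · rw [show k = ⟨j, Nat.lt_of_succ_lt hj⟩ from Fin.ext h₀]; exact hp.1
  by_cases h₁ : (k : ℕ) = j + 1
  · rw [show k = ⟨j + 1, hj⟩ from Fin.ext h₁]; exact hp.2
  exact hk k h₀ h₁

theorem eq_adjSwap_iff (t s : Fin N → Fin n) :
    t = adjSwap hj s ↔ adjPair hj t = (adjPair hj s).swap ∧
      ∀ k : Fin N, (k : ℕ) ≠ j → (k : ℕ) ≠ j + 1 → t k = s k := by
  rw [eq_iff_adjPair_eq_and_forall hj, adjPair_adjSwap]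
  refine and_congr_right' (forall_congr' fun k => imp_congr_right fun h₀ =>
    imp_congr_right fun h₁ => ?_)
  rw [adjSwap_apply_of_ne hj s h₀ h₁]

theorem val_swap_adj (x : Fin N) :
    (Equiv.swap (⟨j, Nat.lt_of_succ_lt hj⟩ : Fin N) ⟨j + 1, hj⟩ x : ℕ) =
      if (x : ℕ) = j then j + 1 else if (x : ℕ) = j + 1 then j else x := by
  simp only [Equiv.swap_apply_def, Fin.ext_iff]
  split_ifs <;> simp_all

theorem content_adjSwap (w : Fin N → Fin n) (i : Fin n) :
    content (adjSwap hj w) i = content w i :=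
  Finset.card_equiv (Equiv.swap ⟨j, Nat.lt_of_succ_lt hj⟩ ⟨j + 1, hj⟩) fun k => by
    simp only [Finset.mem_filter, Finset.mem_univ, true_and]
    rfl

theorem swap_adj_lt_swap_adj_iff {a b : Fin N}
    (hab : ¬(a = ⟨j + 1, hj⟩ ∧ b = ⟨j, Nat.lt_of_succ_lt hj⟩)) :
    Equiv.swap ⟨j, Nat.lt_of_succ_lt hj⟩ ⟨j + 1, hj⟩ a <
        Equiv.swap ⟨j, Nat.lt_of_succ_lt hj⟩ ⟨j + 1, hj⟩ b ↔
      a < b ∧ ¬(a = ⟨j, Nat.lt_of_succ_lt hj⟩ ∧ b = ⟨j + 1, hj⟩) := by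
  simp only [Fin.lt_def, val_swap_adj, Fin.ext_iff] at hab ⊢
  split_ifs <;> omega

theorem invw_eq_invw_adjSwap_add_one {w : Fin N → Fin n}
    (hd : w ⟨j + 1, hj⟩ < w ⟨j, Nat.lt_of_succ_lt hj⟩) :
    invw w = invw (adjSwap hj w) + 1 := by
  set σ := Equiv.swap (⟨j, Nat.lt_of_succ_lt hj⟩ : Fin N) ⟨j + 1, hj⟩
  set inversions := fun v : Fin N → Fin n =>
    Finset.univ.filter fun p : Fin N × Fin N => p.1 < p.2 ∧ v p.2 < v p.1
  have hmem : (⟨j, Nat.lt_of_succ_lt hj⟩, ⟨j + 1, hj⟩) ∈ inversions w := by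
    simp only [inversions, Finset.mem_filter, Finset.mem_univ, true_and]
    exact ⟨Fin.mk_lt_mk.mpr j.lt_succ_self, hd⟩
  have hmap : (inversions (adjSwap hj w)).map (σ.prodCongr σ).toEmbedding =
      (inversions w).erase (⟨j, Nat.lt_of_succ_lt hj⟩, ⟨j + 1, hj⟩) := by
    ext ⟨a, b⟩
    simp only [Finset.mem_map_equiv, Finset.mem_erase, Finset.mem_filter, Finset.mem_univ,
      true_and, inversions, Equiv.prodCongr_symm, Equiv.symm_swap, Equiv.prodCongr_apply,
      Prod.map, adjSwap, Function.comp_apply, σ, Equiv.swap_apply_self, ne_eq, Prod.mk.injEq]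
    by_cases hab : a = ⟨j + 1, hj⟩ ∧ b = ⟨j, Nat.lt_of_succ_lt hj⟩
    · obtain ⟨rfl, rfl⟩ := hab
      simp [Fin.ext_iff, Fin.mk_lt_mk, hd.not_gt]
    · rw [swap_adj_lt_swap_adj_iff hj hab]
      tauto
  have hcard := congrArg Finset.card hmap
  rw [Finset.card_map, Finset.card_erase_of_mem hmem] at hcard
  have hpos := Finset.card_pos.mpr ⟨_, hmem⟩
  change (inversions w).card = (inversions (adjSwap hj w)).card + 1
  omega

end AdjacentSwap

theorem adjSwap_comm {j k : ℕ} (hjk : j + 2 ≤ k) (hj : j + 1 < N) (hk : k + 1 < N)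
    (s : Fin N → Fin n) : adjSwap hj (adjSwap hk s) = adjSwap hk (adjSwap hj s) := by
  funext x
  simp only [adjSwap, Function.comp_apply]
  congr 1
  ext
  simp only [val_swap_adj]
  split_ifs <;> omega

theorem adjSwap_braid {j : ℕ} (hj : j + 1 < N) (hj' : j + 2 < N) (s : Fin N → Fin n) :
    adjSwap hj (adjSwap hj' (adjSwap hj s)) = adjSwap hj' (adjSwap hj (adjSwap hj' s)) := by
  funext x
  simp only [adjSwap, Function.comp_apply]
  congr 1
  ext
  simp only [val_swap_adj]
  split_ifs <;> omega

theorem invw_eq_zero_iff_monotone (w : Fin N → Fin n) : invw w = 0 ↔ Monotone w := by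
  simp only [invw, Finset.card_eq_zero, Finset.filter_eq_empty_iff, Finset.mem_univ,
    true_implies, not_and, not_lt, Prod.forall]
  exact ⟨fun h k l hkl => hkl.eq_or_lt.elim (fun e => e ▸ le_rfl) (h k l),
    fun h k l hkl => h hkl.le⟩

theorem exists_descent_of_invw_ne_zero {w : Fin N → Fin n} (h : invw w ≠ 0) :
    ∃ (j : ℕ) (hj : j + 1 < N), w ⟨j + 1, hj⟩ < w ⟨j, Nat.lt_of_succ_lt hj⟩ := by
  rw [Ne, invw_eq_zero_iff_monotone] at h
  cases N with
  | zero => exact absurd (fun a => a.elim0) h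
  | succ N =>
    obtain ⟨i, hi⟩ := not_forall.mp (mt Fin.monotone_iff_le_succ.mpr h)
    exact ⟨i, by omega, not_le.mp hi⟩

theorem eq_of_monotone_of_content_eq {w w' : Fin N → Fin n} (hw : Monotone w)
    (hw' : Monotone w') (hc : ∀ i, content w i = content w' i) : w = w' := by
  have hcount (v : Fin N → Fin n) (i : Fin n) : (List.ofFn v).count i = content v i := by
    rw [List.ofFn_eq_map, List.count, List.countP_map, content, Fin.univ_def,
      List.countP_eq_length_filter]
    rfl
  refine List.ofFn_injective (List.Perm.eq_of_sortedLE (List.sortedLE_ofFn_iff.mpr hw)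
    (List.sortedLE_ofFn_iff.mpr hw') (List.perm_iff_count.mpr fun i => ?_))
  rw [hcount, hcount, hc]

section Rop

variable (q : ℝ)

theorem rop_eq_heckeMat {j : ℕ} (hj : j + 1 < N) :
    rop n N q j = heckeMat q (adjPair hj) (adjSwap hj) := by
  ext t s
  have hdiag := (eq_iff_adjPair_eq_and_forall hj t s).symm
  have hoff := (eq_adjSwap_iff hj t s).symm
  simp only [adjPair] at hdiag hoff
  simp only [rop, dif_pos hj, rMat_eq_heckeMat, heckeMat, id, add_mul, mul_assoc,
    ite_zero_mul_ite_zero, mul_one, hdiag, hoff]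
  rfl

theorem rop_of_not_lt {j : ℕ} (hj : ¬ j + 1 < N) : rop n N q j = 1 := by
  ext t s
  simp [rop, dif_neg hj, one_apply]

theorem rop_mul_self (j : ℕ) :
    rop n N q j * rop n N q j =
      (1 - ((q : ℂ))⁻¹ ^ 2) • rop n N q j + ((q : ℂ))⁻¹ ^ 2 • (1 : Matrix _ _ ℂ) := by
  by_cases hj : j + 1 < N
  · rw [rop_eq_heckeMat q hj]
    exact heckeMat_mul_self q (adjSwap_involutive hj) (adjPair_adjSwap hj)
  · rw [rop_of_not_lt q hj, one_mul, ← add_smul, sub_add_cancel, one_smul]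

theorem rop_mul_rop_comm {j k : ℕ} (hjk : j + 2 ≤ k) :
    rop n N q j * rop n N q k = rop n N q k * rop n N q j := by
  by_cases hk : k + 1 < N
  · have hj : j + 1 < N := by omega
    rw [rop_eq_heckeMat q hj, rop_eq_heckeMat q hk]
    ext p s
    simp only [mul_heckeMat_apply, heckeMat, adjPair, adjSwap_comm hjk hj hk,
      adjSwap_apply_of_ne hj s (k := ⟨k, _⟩) (show k ≠ j by omega) (show k ≠ j + 1 by omega),
      adjSwap_apply_of_ne hj s (k := ⟨k + 1, _⟩) (show k + 1 ≠ j by omega)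
        (show k + 1 ≠ j + 1 by omega),
      adjSwap_apply_of_ne hk s (k := ⟨j, _⟩) (show j ≠ k by omega) (show j ≠ k + 1 by omega),
      adjSwap_apply_of_ne hk s (k := ⟨j + 1, _⟩) (show j + 1 ≠ k by omega)
        (show j + 1 ≠ k + 1 by omega)]
    ring
  · rw [rop_of_not_lt q hk, one_mul, mul_one]

section BraidCoefficients

variable (a b c : Fin n)

theorem rDiag_braid_coeff :
    rDiag q (a, b) * rDiag q (b, c) * rDiag q (a, b) +
        rOff q (a, b) * rDiag q (a, c) * rOff q (b, a) =
      rDiag q (b, c) * rDiag q (a, b) * rDiag q (b, c) +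
        rOff q (b, c) * rDiag q (a, c) * rOff q (c, b) := by
  simp only [rDiag, rOff, Fin.ext_iff, Fin.lt_def]
  split_ifs <;> first | omega | ring

theorem rOff_left_braid_coeff :
    rDiag q (a, b) * rDiag q (b, c) * rOff q (a, b) +
        rOff q (a, b) * rDiag q (a, c) * rDiag q (b, a) =
      rDiag q (b, c) * rOff q (a, b) * rDiag q (a, c) := by
  simp only [rDiag, rOff, Fin.ext_iff, Fin.lt_def]
  split_ifs <;> first | omega | ring

theorem rOff_right_braid_coeff :
    rDiag q (a, b) * rOff q (b, c) * rDiag q (a, c) =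
      rDiag q (b, c) * rDiag q (a, b) * rOff q (b, c) +
        rOff q (b, c) * rDiag q (a, c) * rDiag q (c, b) := by
  simp only [rDiag, rOff, Fin.ext_iff, Fin.lt_def]
  split_ifs <;> first | omega | ring

end BraidCoefficients

theorem rop_braid {j : ℕ} (hj' : j + 2 < N) :
    rop n N q j * rop n N q (j + 1) * rop n N q j =
      rop n N q (j + 1) * rop n N q j * rop n N q (j + 1) := by
  have hj : j + 1 < N := by omega
  rw [rop_eq_heckeMat q hj, rop_eq_heckeMat q hj']
  ext p s
  simp only [mul_heckeMat_apply, heckeMat, adjPair, adjSwap_apply_left, adjSwap_apply_right,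
    adjSwap_involutive _ _,
    adjSwap_apply_of_ne hj' _ (k := ⟨j, _⟩) (show j ≠ j + 1 by omega) (show j ≠ j + 2 by omega),
    adjSwap_apply_of_ne hj _ (k := ⟨j + 2, _⟩) (show j + 2 ≠ j by omega)
      (show j + 2 ≠ j + 1 by omega)]
  rw [adjSwap_braid hj hj' s]
  set a := s ⟨j, _⟩
  set b := s ⟨j + 1, hj⟩
  set c := s ⟨j + 2, hj'⟩
  linear_combination
    rDiag_braid_coeff q a b c * (if p = s then (1 : ℂ) else 0) +
      rOff_left_braid_coeff q a b c * (if p = adjSwap hj s then (1 : ℂ) else 0) +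
      rOff_right_braid_coeff q a b c * (if p = adjSwap hj' s then (1 : ℂ) else 0)

end Rop

section Shuffle

variable (q : ℝ) (z : ℂ)

theorem Smat_zero : Smat n N q 0 z = 1 := by
  simp [Smat, prodChain]

theorem prodChain_succ_succ (m t : ℕ) :
    prodChain n N q (m + 1) (t + 1) = prodChain n N q m t * rop n N q m := by
  induction t with
  | zero => simp [prodChain]
  | succ t ih =>
    rw [prodChain, ih, prodChain, mul_assoc, show m + 1 - (t + 1 + 1) = m - (t + 1) by omega]

theorem Smat_succ (m : ℕ) : Smat n N q (m + 1) z = 1 + z • (Smat n N q m z * rop n N q m) := by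
  rw [Smat, Finset.sum_range_succ', Smat, Finset.sum_mul, Finset.smul_sum, add_comm]
  simp only [prodChain_succ_succ, pow_succ, mul_comm _ z, ← smul_smul, smul_mul_assoc,
    pow_zero, one_smul, prodChain.eq_1]

theorem prodChain_mul_rop_comm {m k : ℕ} (hk : m + 1 ≤ k) {t : ℕ} (ht : t ≤ m) :
    prodChain n N q m t * rop n N q k = rop n N q k * prodChain n N q m t := by
  induction t with
  | zero => simp [prodChain]
  | succ t ih =>
    rw [prodChain, mul_assoc, ih (by omega), ← mul_assoc,
      rop_mul_rop_comm q (show m - (t + 1) + 2 ≤ k by omega), mul_assoc]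

theorem Smat_mul_rop_comm {m k : ℕ} (hk : m + 1 ≤ k) :
    Smat n N q m z * rop n N q k = rop n N q k * Smat n N q m z := by
  rw [Smat, Finset.sum_mul, Finset.mul_sum]
  refine Finset.sum_congr rfl fun t ht => ?_
  rw [smul_mul_assoc, mul_smul_comm,
    prodChain_mul_rop_comm q hk (Nat.lt_succ_iff.mp (Finset.mem_range.mp ht))]

theorem Yaux_mul_rop_comm {m k : ℕ} (hk : m + 1 ≤ k) :
    Yaux n N q z m * rop n N q k = rop n N q k * Yaux n N q z m := by
  induction m with
  | zero => simp [Yaux]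
  | succ m ih =>
    rw [Yaux, mul_assoc, ih (by omega), ← mul_assoc, Smat_mul_rop_comm q z hk, mul_assoc]

variable {q z}

theorem Smat_succ_mul_Smat_mul_rop
    (hz : z ^ 2 * ((q : ℂ))⁻¹ ^ 2 = 1 + z * (1 - ((q : ℂ))⁻¹ ^ 2)) {m : ℕ} (hm : m + 1 < N) :
    Smat n N q (m + 1) z * Smat n N q m z * rop n N q m =
      (z * ((q : ℂ))⁻¹ ^ 2) • (Smat n N q (m + 1) z * Smat n N q m z) := by
  induction m with
  | zero =>
    rw [Smat_zero, mul_one, Smat_succ, Smat_zero, one_mul]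
    exact one_add_smul_mul_eq_smul_of_quadratic (rop_mul_self q 0) hz
  | succ m ih =>
    rw [Smat_succ q z (m + 1)]
    exact one_add_smul_mul_mul_eq_smul_of_braid (rop_mul_self q (m + 1)) hz (Smat_succ q z m)
      (rop_braid q hm) (Smat_mul_rop_comm q z le_rfl).symm (ih (by omega))

theorem Yaux_mul_rop
    (hz : z ^ 2 * ((q : ℂ))⁻¹ ^ 2 = 1 + z * (1 - ((q : ℂ))⁻¹ ^ 2)) {m j : ℕ} (hm : m < N)
    (hj : j < m) :
    Yaux n N q z m * rop n N q j = (z * ((q : ℂ))⁻¹ ^ 2) • Yaux n N q z m := by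
  induction m with
  | zero => omega
  | succ m ih =>
    rcases Nat.lt_succ_iff_lt_or_eq.mp hj with hjm | rfl
    · rw [Yaux, mul_assoc, ih (by omega) hjm, mul_smul_comm]
    · cases j with
      | zero => simpa [Yaux, Smat_zero] using Smat_succ_mul_Smat_mul_rop hz (n := n) (m := 0) hm
      | succ m =>
        rw [Yaux, Yaux, ← mul_assoc, mul_assoc, Yaux_mul_rop_comm q z le_rfl, ← mul_assoc,
          Smat_succ_mul_Smat_mul_rop hz hm, smul_mul_assoc]

theorem Ymat_mul_rop
    (hz : z ^ 2 * ((q : ℂ))⁻¹ ^ 2 = 1 + z * (1 - ((q : ℂ))⁻¹ ^ 2)) {j : ℕ} (hj : j + 1 < N) :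
    Ymat n N q z * rop n N q j = (z * ((q : ℂ))⁻¹ ^ 2) • Ymat n N q z :=
  Yaux_mul_rop hz (by omega) (by omega)

end Shuffle

variable {q : ℝ} {z : ℂ}

theorem Ymat_mulVec_single_eq_smul_adjSwap (hq : (q : ℂ) ≠ 0)
    (hz : z ^ 2 * ((q : ℂ))⁻¹ ^ 2 = 1 + z * (1 - ((q : ℂ))⁻¹ ^ 2)) {j : ℕ} (hj : j + 1 < N)
    {w : Fin N → Fin n} (hd : w ⟨j + 1, hj⟩ < w ⟨j, Nat.lt_of_succ_lt hj⟩) :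
    Ymat n N q z *ᵥ Pi.single w 1 =
      ((q : ℂ) * (z * ((q : ℂ))⁻¹ ^ 2)) • Ymat n N q z *ᵥ Pi.single (adjSwap hj w) 1 := by
  have hY := Ymat_mul_rop (n := n) hz hj
  rw [rop_eq_heckeMat q hj] at hY
  have h := mulVec_single_eq_smul_of_mul_heckeMat hq hY (s := adjSwap hj w) (by simpa [adjPair])
  rwa [adjSwap_involutive] at h

theorem Ymat_mulVec_single_eq_pow_smul (hq : (q : ℂ) ≠ 0)
    (hz : z ^ 2 * ((q : ℂ))⁻¹ ^ 2 = 1 + z * (1 - ((q : ℂ))⁻¹ ^ 2)) {w w' : Fin N → Fin n}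
    (hw' : Monotone w') (hc : ∀ i, content w' i = content w i) :
    Ymat n N q z *ᵥ Pi.single w 1 =
      ((q : ℂ) * (z * ((q : ℂ))⁻¹ ^ 2)) ^ invw w • Ymat n N q z *ᵥ Pi.single w' 1 := by
  induction hk : invw w generalizing w with
  | zero =>
    rw [eq_of_monotone_of_content_eq hw' ((invw_eq_zero_iff_monotone w).mp hk) hc, pow_zero,
      one_smul]
  | succ k ih =>
    obtain ⟨j, hj, hd⟩ := exists_descent_of_invw_ne_zero (w := w) (by omega)
    rw [Ymat_mulVec_single_eq_smul_adjSwap hq hz hj hd,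
      ih (fun i => (hc i).trans (content_adjSwap hj w i).symm)
        (by have := invw_eq_invw_adjSwap_add_one hj hd; omega), smul_smul, ← pow_succ']

theorem one_add_smul_rMat_mulVec_single_swap (hq : (q : ℂ) ≠ 0)
    (hz : z ^ 2 * ((q : ℂ))⁻¹ ^ 2 = 1 + z * (1 - ((q : ℂ))⁻¹ ^ 2)) {x y : Fin n} (hxy : x < y) :
    (1 + z • rMat n q) *ᵥ Pi.single (y, x) 1 =
      ((q : ℂ) * (z * ((q : ℂ))⁻¹ ^ 2)) • (1 + z • rMat n q) *ᵥ Pi.single (x, y) 1 := by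
  have hA := one_add_smul_mul_eq_smul_of_quadratic (rMat_mul_self (n := n) q) hz
  rw [rMat_eq_heckeMat q] at hA ⊢
  exact mulVec_single_eq_smul_of_mul_heckeMat (π := id) (s := (x, y)) hq hA hxy

end QShuffle

theorem stmt7_general (n N : ℕ) (q : ℝ) (hq : 0 < q)
    (w w' : Fin N → Fin n) (hw' : Monotone w') (hc : ∀ i, content w' i = content w i) :
    ((Ymat n N q ((q : ℂ) ^ 2)).mulVec (Pi.single w 1) =
      ((q : ℂ) ^ invw w) • (Ymat n N q ((q : ℂ) ^ 2)).mulVec (Pi.single w' 1)) ∧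
    ((Ymat n N q (-1)).mulVec (Pi.single w 1) =
      ((-((q : ℂ))⁻¹) ^ invw w) • (Ymat n N q (-1)).mulVec (Pi.single w' 1)) ∧
    (∀ x y : Fin n, x < y →
      ((1 + ((q : ℂ) ^ 2) • rMat n q).mulVec (Pi.single (y, x) 1) =
        (q : ℂ) • (1 + ((q : ℂ) ^ 2) • rMat n q).mulVec (Pi.single (x, y) 1)) ∧
      ((1 - rMat n q).mulVec (Pi.single (y, x) 1) =
        (-((q : ℂ))⁻¹) • (1 - rMat n q).mulVec (Pi.single (x, y) 1))) := by
  have hq0 : (q : ℂ) ≠ 0 := Complex.ofReal_ne_zero.mpr hq.ne'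
  have hsym : ((q : ℂ) ^ 2) ^ 2 * ((q : ℂ))⁻¹ ^ 2 = 1 + (q : ℂ) ^ 2 * (1 - ((q : ℂ))⁻¹ ^ 2) := by
    field_simp
    ring
  have hanti : (-1 : ℂ) ^ 2 * ((q : ℂ))⁻¹ ^ 2 = 1 + (-1) * (1 - ((q : ℂ))⁻¹ ^ 2) := by ring
  have hφsym : (q : ℂ) * ((q : ℂ) ^ 2 * ((q : ℂ))⁻¹ ^ 2) = q := by field_simp
  have hφanti : (q : ℂ) * (-1 * ((q : ℂ))⁻¹ ^ 2) = -((q : ℂ))⁻¹ := by field_simp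
  have hsub : (1 - rMat n q : Matrix (Fin n × Fin n) (Fin n × Fin n) ℂ) =
      1 + (-1 : ℂ) • rMat n q := by
    rw [neg_one_smul, sub_eq_add_neg]
  refine ⟨?_, ?_, fun x y hxy => ⟨?_, ?_⟩⟩
  · simpa only [hφsym] using QShuffle.Ymat_mulVec_single_eq_pow_smul hq0 hsym hw' hc
  · simpa only [hφanti] using QShuffle.Ymat_mulVec_single_eq_pow_smul hq0 hanti hw' hc
  · simpa only [hφsym] using QShuffle.one_add_smul_rMat_mulVec_single_swap hq0 hsym hxy
  · simpa only [hφanti, hsub] using QShuffle.one_add_smul_rMat_mulVec_single_swap hq0 hanti hxy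

/-- for any word `w` with weakly increasing rearrangement `w'`,
`Y_N(q²) e_w = q^{inv(w)} Y_N(q²) e_{w'}` and `Y_N(−1) e_w = (−q⁻¹)^{inv(w)} Y_N(−1) e_{w'}`;
in particular, for `x < y`, `(1 + q² r)(e_y ⊗ e_x) = q (1 + q² r)(e_x ⊗ e_y)` and
`(1 − r)(e_y ⊗ e_x) = −q⁻¹ (1 − r)(e_x ⊗ e_y)`. -/
theorem stmt7 (n N : ℕ) (hn : 2 ≤ n) (hN : 2 ≤ N) (q : ℝ) (hq : 0 < q) (hq1 : q ≠ 1)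
    (w w' : Fin N → Fin n) (hw' : Monotone w') (hc : ∀ i, content w' i = content w i) :
    ((Ymat n N q ((q : ℂ) ^ 2)).mulVec (Pi.single w 1) =
      ((q : ℂ) ^ invw w) • (Ymat n N q ((q : ℂ) ^ 2)).mulVec (Pi.single w' 1)) ∧
    ((Ymat n N q (-1)).mulVec (Pi.single w 1) =
      ((-((q : ℂ))⁻¹) ^ invw w) • (Ymat n N q (-1)).mulVec (Pi.single w' 1)) ∧
    (∀ x y : Fin n, x < y →
      ((1 + ((q : ℂ) ^ 2) • rMat n q).mulVec (Pi.single (y, x) 1) =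
        (q : ℂ) • (1 + ((q : ℂ) ^ 2) • rMat n q).mulVec (Pi.single (x, y) 1)) ∧
      ((1 - rMat n q).mulVec (Pi.single (y, x) 1) =
        (-((q : ℂ))⁻¹) • (1 - rMat n q).mulVec (Pi.single (x, y) 1))) :=
  stmt7_general n N q hq w w' hw' hc

end
end

section
/- Fix integers n ≥ 2, N ≥ 2 and a real number q > 0, q ≠ 1. For nonnegative integers k_1,…,k_n with k_1 + ⋯ + k_n = N define on (ℂⁿ)^{⊗N} the normalized q-Dicke state ĥb^{(0)}_{k_1…k_n} = b^{(0)}_{k_1…k_n}/‖b^{(0)}_{k_1…k_n}‖, where b^{(0)}_{k_1…k_n} = Σ_{w ∈ W(k_1,…,k_n)} q^{inv(w)} e_{w_1} ⊗ ⋯ ⊗ e_{w_N}, with W(k_1,…,k_n) the set of words in {1,…,n} with exactly k_i letters i and inv(w) the number of inversions. Let E_j = Σ_{k=1}^N (K_j^{−1})^{⊗(k−1)} ⊗ e_{j+1,j} ⊗ K_j^{⊗(N−k)}, F_j = Σ_{k=1}^N (K_j^{−1})^{⊗(k−1)} ⊗ e_{j,j+1} ⊗ K_j^{⊗(N−k)},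 q^{𝓔_i} = (q^{e_{i,i}})^{⊗N}, q^{H_j} = q^{𝓔_j}(q^{𝓔_{j+1}})^{−1}, where K_j is the diagonal matrix with q^{1/2} in position j, q^{−1/2} in position j+1, 1 elsewhere. Then for each j ∈ {1,…,n−1} with k_j ≥ 1: E_j ĥb^{(0)}_{k_1…k_j k_{j+1}…k_n} = √([k_{j+1}+1]_q [k_j]_q) · ĥb^{(0)}_{k_1…(k_j−1)(k_{j+1}+1)…k_n} and F_j ĥb^{(0)}_{k_1…(k_j−1)(k_{j+1}+1)…k_n} = √([k_{j+1}+1]_q [k_j]_q) · ĥb^{(0)}_{k_1…k_j k_{j+1}…k_n}, where [m]_q = (q^m − q^{−m})/(q − q^{−1}); moreover q^{𝓔_i} ĥb^{(0)}_{k_1…k_n} = q^{k_i} ĥb^{(0)}_{k_1…k_n} for all i and q^{H_j} ĥb^{(0)}_{k_1…k_n} = q^{k_j − k_{j+1}} ĥb^{(0)}_{k_1…k_n}. -/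
open Finset Matrix Kronecker

noncomputable section

/-- The symmetric `q`-integer `[m]_q = (q^m − q^{−m})/(q − q⁻¹)`. -/
def qnum (q : ℝ) (m : ℕ) : ℝ := (q ^ m - (q⁻¹) ^ m) / (q - q⁻¹)

/-- The Euclidean norm of the q-Dicke state `b⁰_{k₁…k_n}`. -/
def bnorm (n N : ℕ) (q : ℝ) (k : Fin n → ℕ) : ℝ :=
  Real.sqrt (∑ w ∈ Finset.univ.filter (fun w : Fin N → Fin n => ∀ i, content w i = k i),
    q ^ (2 * invw w))

/-- The normalized q-Dicke state `b̂⁰_{k₁…k_n}`. -/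
def hatb (n N : ℕ) (q : ℝ) (k : Fin n → ℕ) : (Fin N → Fin n) → ℂ :=
  ((bnorm n N q k : ℂ))⁻¹ • bstate n N q k

/-!
`E_j` and `F_j` move a single letter: applied to a vector indexed by words, they sum over the
positions `p` carrying `j + 1` (resp. `j`), replace that letter by `j` (resp. `j + 1`), and weight
the result by a power of `√q` counting the letters `j`, `j + 1` on either side of `p`. Replacing a
letter by an adjacent one changes the inversion number by the number of equal letters on one side
of `p`, so on a q-Dicke state all these weights combine into `√q ^ (1 - k_j - k_{j+1})` times a
geometric sum: `E_j b_k = c_E b_{k'}` and `F_j b_{k'} = c_F b_k`. Since `F_j` is the transpose of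
`E_j`, pairing gives `c_E ‖b_{k'}‖² = c_F ‖b_k‖²`, so the coefficient between the normalized
states is `√(c_E c_F) = √([k_{j+1}+1]_q [k_j]_q)`. The Cartan elements are diagonal in the word
basis, with eigenvalue `q ^ k_i` on every word of content `k`.
-/

theorem Finset.sum_card_filter_lt {α M : Type*} [LinearOrder α] [AddCommMonoid M]
    (s : Finset α) (g : ℕ → M) :
    ∑ p ∈ s, g #{m ∈ s | m < p} = ∑ t ∈ range #s, g t := by
  induction s using Finset.induction_on_max with
  | empty => simp
  | insert a s hlt ih =>
    have ha : a ∉ s := fun h => lt_irrefl a (hlt a h)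
    have below_a : #{m ∈ insert a s | m < a} = #s := by
      rw [filter_insert, if_neg (lt_irrefl a), filter_true_of_mem hlt]
    have below_p : ∀ p ∈ s, #{m ∈ insert a s | m < p} = #{m ∈ s | m < p} := fun p hp => by
      rw [filter_insert, if_neg (hlt p hp).not_gt]
    rw [sum_insert ha, below_a, sum_congr rfl fun p hp => congrArg g (below_p p hp), ih,
      card_insert_of_notMem ha, sum_range_succ, add_comm]

theorem Finset.prod_ite_eq_pow_mul_pow {ι α M : Type*} [CommMonoid M] [DecidableEq α]
    (s : Finset ι) (g : ι → α) {a b : α} (hab : a ≠ b) (x y : M) :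
    ∏ m ∈ s, (if g m = a then x else if g m = b then y else 1)
      = x ^ #{m ∈ s | g m = a} * y ^ #{m ∈ s | g m = b} := by
  rw [prod_ite, prod_const, prod_ite, prod_const, prod_const_one, mul_one, filter_filter]
  congr 3
  exact filter_congr fun m _ => and_iff_right_of_imp fun h => h ▸ hab.symm

theorem Fintype.sum_sum_add_sum_row_col_eq {α : Type*} [Fintype α] [DecidableEq α]
    (F G : α → α → ℕ) (p : α)
    (hFG : ∀ a b, (a ≠ p ∧ b ≠ p) ∨ (a = p ∧ b = p) → F a b = G a b) :
    ∑ a, ∑ b, F a b + ∑ m, (G p m + G m p) = ∑ a, ∑ b, G a b + ∑ m, (F p m + F m p) := by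
  have row_col : ∀ H : α → α → ℕ, ∑ m, (H p m + H m p)
      = ∑ a, ∑ b, ((if a = p then H a b else 0) + if b = p then H a b else 0) := by
    intro H
    simp [sum_add_distrib, Finset.sum_ite_eq']
  rw [row_col, row_col, ← sum_add_distrib, ← sum_add_distrib]
  refine Finset.sum_congr rfl fun a _ => ?_
  rw [← sum_add_distrib, ← sum_add_distrib]
  refine Finset.sum_congr rfl fun b _ => ?_
  by_cases ha : a = p <;> by_cases hb : b = p
  · simp [ha, hb, hFG p p (by simp)]
  · simp [ha, hb]; ring
  · simp [ha, hb]; ring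
  · simp [ha, hb, hFG a b (Or.inl ⟨ha, hb⟩)]

theorem ofReal_pow_eq_sqrt_zpow {q : ℝ} (hq : 0 ≤ q) (m : ℕ) :
    (q : ℂ) ^ m = (√q : ℂ) ^ (2 * m : ℤ) := by
  rw [_root_.zpow_mul, zpow_ofNat, zpow_natCast, ← Complex.ofReal_pow √q 2, Real.sq_sqrt hq]

theorem inv_diagonal_eq_diagonal_inv {ι K : Type*} [Fintype ι] [DecidableEq ι] [Field K]
    {v : ι → K} (hv : ∀ i, v i ≠ 0) : (diagonal v)⁻¹ = diagonal v⁻¹ := by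
  refine inv_eq_left_inv ?_
  rw [diagonal_mul_diagonal, ← diagonal_one]
  exact congrArg diagonal (funext fun i => inv_mul_cancel₀ (hv i))

theorem mulVec_inv_smul_eq_sqrt_smul {ι : Type*} [Fintype ι] {A : Matrix ι ι ℂ} {b b' : ι → ℂ}
    {c c' β β' : ℝ} (hA : A *ᵥ b = (c : ℂ) • b') (hc : 0 < c) (hβ : 0 < β) (hβ' : 0 < β')
    (hratio : c * β' ^ 2 = c' * β ^ 2) :
    A *ᵥ ((β : ℂ)⁻¹ • b) = (√(c * c') : ℂ) • ((β' : ℂ)⁻¹ • b') := by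
  have hsq : c * c' = (c * β' / β) ^ 2 := by
    rw [div_pow, mul_pow, eq_div_iff (by positivity)]
    linear_combination (-c) * hratio
  rw [mulVec_smul, hA, smul_smul, smul_smul, hsq, Real.sqrt_sq (by positivity)]
  have hβ'0 : (β' : ℂ) ≠ 0 := by exact_mod_cast hβ'.ne'
  congr 1
  push_cast
  field_simp

namespace QDicke

variable {n N : ℕ}

def countBefore (f : Fin N → Fin n) (c : Fin n) (p : Fin N) : ℕ := #{m | f m = c ∧ m < p}

def countAfter (f : Fin N → Fin n) (c : Fin n) (p : Fin N) : ℕ := #{m | f m = c ∧ p < m}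

theorem content_eq_sum (f : Fin N → Fin n) (c : Fin n) :
    content f c = ∑ m, if f m = c then 1 else 0 := card_filter _ _

theorem content_eq_add_countBefore_add_countAfter (f : Fin N → Fin n) (c : Fin n) (p : Fin N) :
    content f c = (if f p = c then 1 else 0) + countBefore f c p + countAfter f c p := by
  simp only [content_eq_sum, countBefore, countAfter, card_filter]
  rw [← Fintype.sum_ite_eq' p (fun m => if f m = c then 1 else 0), ← sum_add_distrib,
    ← sum_add_distrib]
  refine sum_congr rfl fun m _ => ?_
  rcases lt_trichotomy m p with h | rfl | h
  · simp [h, h.ne, h.not_gt]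
  · simp
  · simp [h, h.ne', h.not_gt]

theorem sum_pow_countBefore {M : Type*} [Semiring M] (f : Fin N → Fin n) (c : Fin n) (x : M) :
    ∑ p with f p = c, x ^ countBefore f c p = ∑ t ∈ range (content f c), x ^ t := by
  simpa only [countBefore, content, filter_filter] using sum_card_filter_lt {p | f p = c} (x ^ ·)

theorem sum_pow_countAfter {M : Type*} [Semiring M] (f : Fin N → Fin n) (c : Fin n) (x : M) :
    ∑ p with f p = c, x ^ countAfter f c p = ∑ t ∈ range (content f c), x ^ t := by
  have after_eq : ∀ p ∈ ({p | f p = c} : Finset _),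
      countAfter f c p = content f c - 1 - countBefore f c p := fun p hp => by
    have := content_eq_add_countBefore_add_countAfter f c p
    rw [if_pos (mem_filter.mp hp).2] at this
    omega
  rw [sum_congr rfl fun p hp => congrArg (x ^ ·) (after_eq p hp), ← sum_range_reflect]
  simpa only [countBefore, content, filter_filter] using
    sum_card_filter_lt {p | f p = c} (fun t => x ^ (content f c - 1 - t))

def moveOne (k : Fin n → ℕ) (a b : Fin n) : Fin n → ℕ :=
  Function.update (Function.update k a (k a - 1)) b (k b + 1)

theorem moveOne_apply_left (k : Fin n → ℕ) {a b : Fin n} (hab : a ≠ b) :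
    moveOne k a b a = k a - 1 := by
  rw [moveOne, Function.update_of_ne hab, Function.update_self]

theorem moveOne_apply_right (k : Fin n → ℕ) (a b : Fin n) : moveOne k a b b = k b + 1 :=
  Function.update_self _ _ _

theorem moveOne_moveOne {k : Fin n → ℕ} {a b : Fin n} (hab : a ≠ b) (hk : 1 ≤ k a) :
    moveOne (moveOne k a b) b a = k := by
  funext i
  simp only [moveOne, Function.update_apply]
  split_ifs <;> subst_vars <;> simp_all

theorem sum_moveOne {k : Fin n → ℕ} {a b : Fin n} (hab : a ≠ b) (hk : 1 ≤ k a) :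
    ∑ i, moveOne k a b i = ∑ i, k i := by
  have h : ∀ i, moveOne k a b i + (if i = a then 1 else 0) = k i + (if i = b then 1 else 0) := by
    intro i
    simp only [moveOne, Function.update_apply]
    split_ifs <;> subst_vars <;> simp_all
  have := sum_congr rfl fun i (_ : i ∈ univ) => h i
  simp only [sum_add_distrib, Fintype.sum_ite_eq'] at this
  omega

theorem content_update_add (f : Fin N → Fin n) (p : Fin N) (v i : Fin n) :
    content (Function.update f p v) i + (if f p = i then 1 else 0)
      = content f i + (if v = i then 1 else 0) := by
  simp only [content_eq_sum, ← add_sum_erase _ _ (mem_univ p), Function.update_self]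
  rw [sum_congr rfl fun m hm => by rw [Function.update_of_ne (ne_of_mem_erase hm)]]
  ring

theorem content_update_eq_iff {f : Fin N → Fin n} {p : Fin N} {u v : Fin n} {k : Fin n → ℕ}
    (hp : f p = u) (huv : u ≠ v) (hk : 1 ≤ k v) :
    content (Function.update f p v) = k ↔ content f = moveOne k v u := by
  simp only [funext_iff]
  refine forall_congr' fun i => ?_
  have := content_update_add f p v i
  simp only [moveOne, Function.update_apply, hp] at this ⊢
  split_ifs at this ⊢ <;> subst_vars <;> simp_all <;> omega

theorem invw_eq_sum (f : Fin N → Fin n) :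
    invw f = ∑ a, ∑ b, if a < b ∧ f b < f a then 1 else 0 := by
  rw [invw, card_filter]
  exact Fintype.sum_prod_type _

theorem invw_update_add_countAfter {f : Fin N → Fin n} {p : Fin N} {u v : Fin n}
    (hp : f p = u) (hvu : (v : ℕ) + 1 = u) :
    invw (Function.update f p v) + countAfter f v p = invw f + countBefore f u p := by
  set g := Function.update f p v with hg
  have h := Fintype.sum_sum_add_sum_row_col_eq (fun a b => if a < b ∧ g b < g a then 1 else 0)
    (fun a b => if a < b ∧ f b < f a then 1 else 0) p (by
      rintro a b (⟨ha, hb⟩ | ⟨rfl, rfl⟩) <;> simp [*])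
  simp only [← invw_eq_sum] at h
  -- Only the pairs through `p` change: lowering `f p` from `u` to `v` loses the inversions
  -- `(p, m)` with `f m = v` and gains the inversions `(m, p)` with `f m = u`.
  have at_p : ∑ m, ((if p < m ∧ g m < g p then 1 else 0) + if m < p ∧ g p < g m then 1 else 0)
        + countAfter f v p
      = ∑ m, ((if p < m ∧ f m < f p then 1 else 0) + if m < p ∧ f p < f m then 1 else 0)
        + countBefore f u p := by
    simp only [countAfter, countBefore, card_filter, ← sum_add_distrib]
    refine sum_congr rfl fun m _ => ?_
    rcases eq_or_ne m p with rfl | hm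
    · simp
    simp only [hg, Function.update_self, Function.update_of_ne hm, hp, Fin.lt_def, Fin.ext_iff]
    have := Fin.val_ne_of_ne hm
    split_ifs <;> omega
  omega

theorem countBefore_update (f : Fin N → Fin n) (p : Fin N) (v c : Fin n) :
    countBefore (Function.update f p v) c p = countBefore f c p := by
  simp only [countBefore]
  congr 1
  exact filter_congr fun m _ => and_congr_left fun h => by rw [Function.update_of_ne h.ne]

theorem countAfter_update (f : Fin N → Fin n) (p : Fin N) (v c : Fin n) :
    countAfter (Function.update f p v) c p = countAfter f c p := by
  simp only [countAfter]
  congr 1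
  exact filter_congr fun m _ => and_congr_left fun h => by rw [Function.update_of_ne h.ne']

theorem invw_update_add_countBefore {f : Fin N → Fin n} {p : Fin N} {u v : Fin n}
    (hp : f p = u) (huv : (u : ℕ) + 1 = v) :
    invw (Function.update f p v) + countBefore f v p = invw f + countAfter f u p := by
  have h := invw_update_add_countAfter (Function.update_self p v f) huv
  rw [Function.update_idem, ← hp, Function.update_eq_self, countAfter_update, countBefore_update,
    eq_comm] at h
  rwa [← hp]

theorem bstate_apply (q : ℝ) (k : Fin n → ℕ) (f : Fin N → Fin n) :
    bstate n N q k f = if content f = k then (q : ℂ) ^ invw f else 0 := by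
  rw [bstate, Finset.sum_apply]
  simp only [Pi.smul_apply, Pi.single_apply, smul_eq_mul, mul_ite, mul_one, mul_zero]
  rw [sum_ite_eq]
  simp [funext_iff]

theorem exists_content_eq (k : Fin n → ℕ) (hk : ∑ i, k i = N) :
    ∃ w : Fin N → Fin n, content w = k := by
  let e : (Σ i, Fin (k i)) ≃ Fin N := Fintype.equivFinOfCardEq (by simp [hk])
  refine ⟨fun t => (e.symm t).1, funext fun i => ?_⟩
  calc content _ i = Fintype.card {t // (e.symm t).1 = i} := (Fintype.card_subtype _).symm
    _ = Fintype.card {x : Σ i, Fin (k i) // x.1 = i} :=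
      Fintype.card_congr (e.symm.subtypeEquiv fun _ => Iff.rfl)
    _ = k i := by rw [Fintype.card_congr (Equiv.sigmaSubtype i), Fintype.card_fin]

theorem bstate_dotProduct_self (q : ℝ) (k : Fin n → ℕ) :
    bstate n N q k ⬝ᵥ bstate n N q k = ((bnorm n N q k ^ 2 : ℝ) : ℂ) := by
  rw [bnorm, Real.sq_sqrt (sum_nonneg fun w _ => by rw [pow_mul]; positivity)]
  simp only [dotProduct, bstate_apply, ite_zero_mul_ite_zero, and_self, ← pow_add, ← two_mul,
    ← sum_filter, funext_iff]
  push_cast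
  rfl

theorem bnorm_pos {q : ℝ} (hq : q ≠ 0) {k : Fin n → ℕ} (hk : ∑ i, k i = N) :
    0 < bnorm n N q k := by
  obtain ⟨w, hw⟩ := exists_content_eq k hk
  refine Real.sqrt_pos.mpr (sum_pos' (fun w _ => by rw [pow_mul]; positivity) ⟨w, ?_, ?_⟩)
  · simp [← funext_iff, hw]
  · rw [pow_mul]; positivity

theorem tensorFam_mulVec_apply {A : Fin N → Matrix (Fin n) (Fin n) ℂ} {p : Fin N} {u v : Fin n}
    {d : Fin N → Fin n → ℂ} (hA : ∀ m ≠ p, A m = diagonal (d m)) (hAp : A p = single u v 1)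
    (w : (Fin N → Fin n) → ℂ) (f : Fin N → Fin n) :
    (tensorFam A *ᵥ w) f
      = if f p = u then (∏ m ∈ univ.erase p, d m (f m)) * w (Function.update f p v) else 0 := by
  rw [mulVec, dotProduct, sum_eq_single (Function.update f p v)]
  · rw [tensorFam, ← mul_prod_erase univ (fun m => A m (f m) (Function.update f p v m)) (mem_univ p),
      Function.update_self, hAp, single_apply]
    simp only [and_true, ite_mul, one_mul, zero_mul, eq_comm (a := u)]
    congr 2
    refine prod_congr rfl fun m hm => ?_
    rw [Function.update_of_ne (ne_of_mem_erase hm), hA m (ne_of_mem_erase hm), diagonal_apply_eq]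
  · intro g _ hg
    obtain ⟨m, hm⟩ := Function.ne_iff.mp hg
    refine mul_eq_zero_of_left (prod_eq_zero (mem_univ m) ?_) _
    rcases eq_or_ne m p with rfl | hmp
    · rw [Function.update_self] at hm
      simp [hAp, Ne.symm hm]
    · rw [Function.update_of_ne hmp] at hm
      rw [hA m hmp, diagonal_apply_ne _ (Ne.symm hm)]
  · exact fun h => absurd (mem_univ _) h

theorem tensorFam_transpose (A : Fin N → Matrix (Fin n) (Fin n) ℂ) :
    (tensorFam A)ᵀ = tensorFam fun m => (A m)ᵀ := by
  ext f g
  rfl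

theorem tensorFam_diagonal (d : Fin N → Fin n → ℂ) :
    tensorFam (fun m => diagonal (d m)) = diagonal fun f => ∏ m, d m (f m) := by
  ext f g
  by_cases hfg : f = g
  · simp [tensorFam, hfg]
  · obtain ⟨m, hm⟩ := Function.ne_iff.mp hfg
    rw [diagonal_apply_ne _ hfg]
    exact prod_eq_zero (mem_univ m) (diagonal_apply_ne _ hm)

def ladder (n N : ℕ) (q : ℝ) (j : ℕ) (u v : Fin n) : Matrix (Fin N → Fin n) (Fin N → Fin n) ℂ :=
  ∑ p : Fin N, tensorFam fun m =>
    if m.1 < p.1 then KmatInv n q j else if m = p then single u v 1 else Kmat n q j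

def ladderWeight (q : ℝ) (j : ℕ) (f : Fin N → Fin n) (p : Fin N) : ℂ :=
  ∏ m ∈ univ.erase p, if m.1 < p.1 then diag (KmatInv n q j) (f m) else diag (Kmat n q j) (f m)

theorem ladder_mulVec_apply (q : ℝ) (j : ℕ) (u v : Fin n) (w : (Fin N → Fin n) → ℂ)
    (f : Fin N → Fin n) :
    (ladder n N q j u v *ᵥ w) f
      = ∑ p, if f p = u then ladderWeight q j f p * w (Function.update f p v) else 0 := by
  rw [ladder, sum_mulVec, Finset.sum_apply]
  refine sum_congr rfl fun p _ => tensorFam_mulVec_apply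
    (d := fun m a => if m.1 < p.1 then diag (KmatInv n q j) a else diag (Kmat n q j) a)
    (fun m hm => ?_) (by simp) w f
  simp only [if_neg hm]
  split_ifs <;> exact (isDiag_diagonal _).diagonal_diag.symm

theorem ladder_transpose (q : ℝ) (j : ℕ) (u v : Fin n) :
    (ladder n N q j u v)ᵀ = ladder n N q j v u := by
  simp only [ladder, transpose_sum, tensorFam_transpose, apply_ite transpose, Kmat, KmatInv,
    diagonal_transpose, transpose_single]

theorem ladderWeight_eq {q : ℝ} (hq : 0 < q) {j : ℕ} {lo hi : Fin n} (hlo : (lo : ℕ) = j)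
    (hhi : (hi : ℕ) = j + 1) (f : Fin N → Fin n) (p : Fin N) :
    ladderWeight q j f p = (√q : ℂ) ^ ((countBefore f hi p : ℤ) - countBefore f lo p
      + countAfter f lo p - countAfter f hi p) := by
  have hs : (√q : ℂ) ≠ 0 := by exact_mod_cast (Real.sqrt_pos.mpr hq).ne'
  have hne : lo ≠ hi := fun h => by omega
  have diag_Kmat : ∀ a, diag (Kmat n q j) a
      = if a = lo then ↑√q else if a = hi then (↑√q)⁻¹ else 1 := by
    simp [Kmat, Fin.ext_iff, hlo, hhi]
  have diag_KmatInv : ∀ a, diag (KmatInv n q j) a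
      = if a = lo then (↑√q)⁻¹ else if a = hi then ↑√q else 1 := by
    simp [KmatInv, Fin.ext_iff, hlo, hhi]
  have before : ∀ c, #{m ∈ {m ∈ univ.erase p | m.1 < p.1} | f m = c} = countBefore f c p := by
    intro c
    simp only [countBefore, filter_filter]
    congr 1
    ext m
    simp only [mem_filter, mem_erase, mem_univ, and_true]
    grind
  have after : ∀ c, #{m ∈ {m ∈ univ.erase p | ¬ m.1 < p.1} | f m = c} = countAfter f c p := by
    intro c
    simp only [countAfter, filter_filter]
    congr 1
    ext m
    simp only [mem_filter, mem_erase, mem_univ, and_true]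
    grind
  rw [ladderWeight, prod_ite]
  simp only [diag_Kmat, diag_KmatInv]
  rw [prod_ite_eq_pow_mul_pow _ _ hne, prod_ite_eq_pow_mul_pow _ _ hne, before, before, after,
    after]
  simp only [zpow_sub₀ hs, zpow_add₀ hs, zpow_natCast, inv_pow]
  field_simp

theorem ladderWeight_mul_pow_invw {q : ℝ} (hq : 0 < q) {j : ℕ} {lo hi : Fin n}
    (hlo : (lo : ℕ) = j) (hhi : (hi : ℕ) = j + 1) {f : Fin N → Fin n} {p : Fin N} {i c : ℕ}
    {e : ℤ} (he : (countBefore f hi p : ℤ) - countBefore f lo p + countAfter f lo p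
      - countAfter f hi p + 2 * i = e + 2 * invw f + 4 * c) :
    ladderWeight q j f p * (q : ℂ) ^ i = (√q : ℂ) ^ e * (q : ℂ) ^ invw f * ((q : ℂ) ^ 2) ^ c := by
  have hs : (√q : ℂ) ≠ 0 := by exact_mod_cast (Real.sqrt_pos.mpr hq).ne'
  rw [ladderWeight_eq hq hlo hhi, ← pow_mul, ofReal_pow_eq_sqrt_zpow hq.le,
    ofReal_pow_eq_sqrt_zpow hq.le, ofReal_pow_eq_sqrt_zpow hq.le, ← zpow_add₀ hs, ← zpow_add₀ hs,
    ← zpow_add₀ hs, he]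
  push_cast
  ring_nf

theorem ladder_mulVec_bstate_apply (q : ℝ) (j : ℕ) {u v : Fin n} (huv : u ≠ v) {k : Fin n → ℕ}
    (hk : 1 ≤ k v) (f : Fin N → Fin n) :
    (ladder n N q j u v *ᵥ bstate n N q k) f = if content f = moveOne k v u then
      ∑ p with f p = u, ladderWeight q j f p * (q : ℂ) ^ invw (Function.update f p v) else 0 := by
  rw [ladder_mulVec_apply]
  split_ifs with hf
  · rw [sum_filter]
    refine sum_congr rfl fun p _ => ?_
    by_cases hp : f p = u
    · rw [if_pos hp, if_pos hp, bstate_apply, if_pos ((content_update_eq_iff hp huv hk).mpr hf)]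
    · rw [if_neg hp, if_neg hp]
  · refine sum_eq_zero fun p _ => ?_
    by_cases hp : f p = u
    · rw [if_pos hp, bstate_apply, if_neg (mt (content_update_eq_iff hp huv hk).mp hf), mul_zero]
    · rw [if_neg hp]

def ladderCoeff (q : ℝ) (a b m : ℕ) : ℝ := √q ^ (1 - a - b : ℤ) * ∑ t ∈ range m, (q ^ 2) ^ t

theorem ladderCoeff_pos {q : ℝ} (hq : 0 < q) (a b : ℕ) {m : ℕ} (hm : 0 < m) :
    0 < ladderCoeff q a b m :=
  mul_pos (zpow_pos (Real.sqrt_pos.mpr hq) _)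
    (sum_pos (fun t _ => by positivity) (nonempty_range_iff.mpr hm.ne'))

theorem qnum_eq {q : ℝ} (hq : 0 < q) (hq1 : q ≠ 1) (m : ℕ) :
    qnum q m = q ^ (1 - m : ℤ) * ∑ t ∈ range m, (q ^ 2) ^ t := by
  have hden : q - q⁻¹ ≠ 0 := by
    rw [show q - q⁻¹ = (q - 1) * (q + 1) / q by field_simp; ring]
    exact div_ne_zero (mul_ne_zero (sub_ne_zero.mpr hq1) (by positivity)) hq.ne'
  have hgeom := geom_sum_mul (q ^ 2) m
  rw [qnum, div_eq_iff hden, zpow_sub₀ hq.ne', zpow_one, zpow_natCast, inv_pow]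
  rw [← pow_mul, mul_comm 2 m, pow_mul] at hgeom
  field_simp
  linear_combination (-1) * hgeom

theorem ladderCoeff_mul_ladderCoeff {q : ℝ} (hq : 0 < q) (hq1 : q ≠ 1) (a b : ℕ) :
    ladderCoeff q a b (b + 1) * ladderCoeff q a b a = qnum q (b + 1) * qnum q a := by
  have hsq : √q ^ (1 - a - b : ℤ) * √q ^ (1 - a - b : ℤ) = q ^ (1 - a - b : ℤ) := by
    rw [← mul_zpow, Real.mul_self_sqrt hq.le]
  rw [qnum_eq hq hq1, qnum_eq hq hq1, ladderCoeff, ladderCoeff]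
  calc _ = (√q ^ (1 - a - b : ℤ) * √q ^ (1 - a - b : ℤ))
        * ((∑ t ∈ range (b + 1), (q ^ 2) ^ t) * ∑ t ∈ range a, (q ^ 2) ^ t) := by ring
    _ = (q ^ (1 - (b + 1 : ℕ) : ℤ) * q ^ (1 - a : ℤ))
        * ((∑ t ∈ range (b + 1), (q ^ 2) ^ t) * ∑ t ∈ range a, (q ^ 2) ^ t) := by
      rw [hsq, ← zpow_add₀ hq.ne']
      congr 2
      push_cast
      ring
    _ = _ := by ring

theorem Eop_mulVec_bstate {q : ℝ} (hq : 0 < q) {j : ℕ} (hj : j + 1 < n) {k : Fin n → ℕ}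
    (hk : 1 ≤ k ⟨j, Nat.lt_of_succ_lt hj⟩) :
    Eop n N q j hj *ᵥ bstate n N q k
      = (ladderCoeff q (k ⟨j, Nat.lt_of_succ_lt hj⟩) (k ⟨j + 1, hj⟩) (k ⟨j + 1, hj⟩ + 1) : ℂ) •
        bstate n N q (moveOne k ⟨j, Nat.lt_of_succ_lt hj⟩ ⟨j + 1, hj⟩) := by
  set lo : Fin n := ⟨j, Nat.lt_of_succ_lt hj⟩
  set hi : Fin n := ⟨j + 1, hj⟩
  have hne : lo ≠ hi := by simp [lo, hi, Fin.ext_iff]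
  funext f
  rw [Pi.smul_apply, bstate_apply, smul_eq_mul, show Eop n N q j hj = ladder n N q j hi lo from rfl,
    ladder_mulVec_bstate_apply q j hne.symm hk]
  split_ifs with hf
  · have content_lo : content f lo + 1 = k lo := by
      have := congrFun hf lo
      rw [moveOne_apply_left _ hne] at this
      omega
    have content_hi : content f hi = k hi + 1 := by
      rw [hf, moveOne_apply_right]
    have term : ∀ p ∈ ({p | f p = hi} : Finset _),
        ladderWeight q j f p * (q : ℂ) ^ invw (Function.update f p lo)
          = (√q : ℂ) ^ (1 - k lo - k hi : ℤ) * (q : ℂ) ^ invw f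
            * ((q : ℂ) ^ 2) ^ countBefore f hi p := by
      intro p hp
      have hp : f p = hi := (mem_filter.mp hp).2
      have hinv := invw_update_add_countAfter hp (v := lo) rfl
      have split_lo := content_eq_add_countBefore_add_countAfter f lo p
      have split_hi := content_eq_add_countBefore_add_countAfter f hi p
      rw [if_neg (by simp [hp, lo, hi, Fin.ext_iff])] at split_lo
      rw [if_pos hp] at split_hi
      exact ladderWeight_mul_pow_invw hq (lo := lo) (hi := hi) rfl rfl (by omega)
    rw [sum_congr rfl term, ← mul_sum, sum_pow_countBefore, content_hi, ladderCoeff]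
    push_cast
    ring
  · rw [mul_zero]

theorem Fop_mulVec_bstate {q : ℝ} (hq : 0 < q) {j : ℕ} (hj : j + 1 < n) {k : Fin n → ℕ}
    (hk : 1 ≤ k ⟨j, Nat.lt_of_succ_lt hj⟩) :
    Fop n N q j hj *ᵥ bstate n N q (moveOne k ⟨j, Nat.lt_of_succ_lt hj⟩ ⟨j + 1, hj⟩)
      = (ladderCoeff q (k ⟨j, Nat.lt_of_succ_lt hj⟩) (k ⟨j + 1, hj⟩)
          (k ⟨j, Nat.lt_of_succ_lt hj⟩) : ℂ) • bstate n N q k := by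
  set lo : Fin n := ⟨j, Nat.lt_of_succ_lt hj⟩
  set hi : Fin n := ⟨j + 1, hj⟩
  have hne : lo ≠ hi := by simp [lo, hi, Fin.ext_iff]
  funext f
  rw [Pi.smul_apply, bstate_apply, smul_eq_mul, show Fop n N q j hj = ladder n N q j lo hi from rfl,
    ladder_mulVec_bstate_apply q j hne (by rw [moveOne_apply_right]; omega), moveOne_moveOne hne hk]
  split_ifs with hf
  · have content_lo : content f lo = k lo := congrFun hf lo
    have term : ∀ p ∈ ({p | f p = lo} : Finset _),
        ladderWeight q j f p * (q : ℂ) ^ invw (Function.update f p hi)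
          = (√q : ℂ) ^ (1 - k lo - k hi : ℤ) * (q : ℂ) ^ invw f
            * ((q : ℂ) ^ 2) ^ countAfter f lo p := by
      intro p hp
      have hp : f p = lo := (mem_filter.mp hp).2
      have hinv := invw_update_add_countBefore hp (v := hi) rfl
      have split_lo := content_eq_add_countBefore_add_countAfter f lo p
      have split_hi := content_eq_add_countBefore_add_countAfter f hi p
      rw [if_pos hp, content_lo] at split_lo
      rw [if_neg (by rw [hp]; exact hne), congrFun hf hi] at split_hi
      exact ladderWeight_mul_pow_invw hq (lo := lo) (hi := hi) rfl rfl (by omega)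
    rw [sum_congr rfl term, ← mul_sum, sum_pow_countAfter, content_lo, ladderCoeff]
    push_cast
    ring
  · rw [mul_zero]

theorem ladderCoeff_mul_bnorm_sq {q : ℝ} (hq : 0 < q) {j : ℕ} (hj : j + 1 < n) {k : Fin n → ℕ}
    (hk : 1 ≤ k ⟨j, Nat.lt_of_succ_lt hj⟩) :
    ladderCoeff q (k ⟨j, Nat.lt_of_succ_lt hj⟩) (k ⟨j + 1, hj⟩) (k ⟨j + 1, hj⟩ + 1)
        * bnorm n N q (moveOne k ⟨j, Nat.lt_of_succ_lt hj⟩ ⟨j + 1, hj⟩) ^ 2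
      = ladderCoeff q (k ⟨j, Nat.lt_of_succ_lt hj⟩) (k ⟨j + 1, hj⟩) (k ⟨j, Nat.lt_of_succ_lt hj⟩)
        * bnorm n N q k ^ 2 := by
  have pairing : (Eop n N q j hj *ᵥ bstate n N q k)
        ⬝ᵥ bstate n N q (moveOne k ⟨j, Nat.lt_of_succ_lt hj⟩ ⟨j + 1, hj⟩)
      = (Fop n N q j hj *ᵥ bstate n N q (moveOne k ⟨j, Nat.lt_of_succ_lt hj⟩ ⟨j + 1, hj⟩))
        ⬝ᵥ bstate n N q k := by
    rw [dotProduct_comm, dotProduct_mulVec, ← mulVec_transpose,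
      show (Eop n N q j hj)ᵀ = Fop n N q j hj from ladder_transpose q j _ _]
  rw [Eop_mulVec_bstate hq hj hk, Fop_mulVec_bstate hq hj hk, smul_dotProduct, smul_dotProduct,
    bstate_dotProduct_self, bstate_dotProduct_self, smul_eq_mul, smul_eq_mul] at pairing
  exact_mod_cast pairing

theorem qEop_eq_diagonal (q : ℝ) (i : Fin n) :
    qEop n N q i = diagonal fun f => (q : ℂ) ^ content f i := by
  rw [qEop, tensorFam_diagonal]
  simp [prod_ite, content]

theorem diagonal_mulVec_hatb {q : ℝ} {k : Fin n → ℕ} {d : (Fin N → Fin n) → ℂ} {c : ℂ}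
    (hd : ∀ f, content f = k → d f = c) :
    diagonal d *ᵥ hatb n N q k = c • hatb n N q k := by
  funext f
  rw [mulVec_diagonal, Pi.smul_apply, smul_eq_mul, hatb, Pi.smul_apply, bstate_apply]
  by_cases hf : content f = k
  · rw [hd f hf]
  · simp [hf]

end QDicke

open QDicke

theorem stmt10_general (n N : ℕ) (q : ℝ) (hq : 0 < q) (hq1 : q ≠ 1)
    (k : Fin n → ℕ) (hk : ∑ i, k i = N) :
    (∀ (j : ℕ) (hj : j + 1 < n), 1 ≤ k ⟨j, Nat.lt_of_succ_lt hj⟩ →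
      ((Eop n N q j hj).mulVec (hatb n N q k) =
        ((Real.sqrt (qnum q (k ⟨j + 1, hj⟩ + 1) * qnum q (k ⟨j, Nat.lt_of_succ_lt hj⟩)) : ℝ) : ℂ) •
          hatb n N q
            (Function.update (Function.update k ⟨j, Nat.lt_of_succ_lt hj⟩
                (k ⟨j, Nat.lt_of_succ_lt hj⟩ - 1)) ⟨j + 1, hj⟩ (k ⟨j + 1, hj⟩ + 1))) ∧
      ((Fop n N q j hj).mulVec
          (hatb n N q
            (Function.update (Function.update k ⟨j, Nat.lt_of_succ_lt hj⟩
                (k ⟨j, Nat.lt_of_succ_lt hj⟩ - 1)) ⟨j + 1, hj⟩ (k ⟨j + 1, hj⟩ + 1))) =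
        ((Real.sqrt (qnum q (k ⟨j + 1, hj⟩ + 1) * qnum q (k ⟨j, Nat.lt_of_succ_lt hj⟩)) : ℝ) : ℂ) •
          hatb n N q k)) ∧
    (∀ i : Fin n,
      (qEop n N q i).mulVec (hatb n N q k) = ((q : ℂ) ^ (k i)) • hatb n N q k) ∧
    (∀ (j : ℕ) (hj : j + 1 < n),
      (qEop n N q ⟨j, Nat.lt_of_succ_lt hj⟩ * (qEop n N q ⟨j + 1, hj⟩)⁻¹).mulVec
          (hatb n N q k) =
        ((q : ℂ) ^ ((k ⟨j, Nat.lt_of_succ_lt hj⟩ : ℤ) - (k ⟨j + 1, hj⟩ : ℤ))) •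
          hatb n N q k) := by
  refine ⟨fun j hj hkj => ?_, fun i => ?_, fun j hj => ?_⟩
  · have hβ := bnorm_pos hq.ne' hk
    have hβ' := bnorm_pos hq.ne' ((sum_moveOne (b := ⟨j + 1, hj⟩) (by simp [Fin.ext_iff]) hkj).trans hk)
    have hratio := ladderCoeff_mul_bnorm_sq (N := N) hq hj hkj
    rw [← ladderCoeff_mul_ladderCoeff hq hq1]
    exact ⟨mulVec_inv_smul_eq_sqrt_smul (Eop_mulVec_bstate hq hj hkj)
        (ladderCoeff_pos hq _ _ (Nat.succ_pos _)) hβ hβ' hratio,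
      mul_comm (ladderCoeff q _ _ _) _ ▸ mulVec_inv_smul_eq_sqrt_smul (Fop_mulVec_bstate hq hj hkj)
        (ladderCoeff_pos hq _ _ hkj) hβ' hβ hratio.symm⟩
  · rw [qEop_eq_diagonal]
    exact diagonal_mulVec_hatb fun f hf => by rw [hf]
  · have hq0 : (q : ℂ) ≠ 0 := by exact_mod_cast hq.ne'
    rw [qEop_eq_diagonal, qEop_eq_diagonal, inv_diagonal_eq_diagonal_inv fun f => pow_ne_zero _ hq0,
      diagonal_mul_diagonal]
    refine diagonal_mulVec_hatb fun f hf => ?_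
    rw [Pi.inv_apply, hf, zpow_sub₀ (by exact_mod_cast hq.ne'), zpow_natCast,
      zpow_natCast, div_eq_mul_inv]

/-- the normalized q-Dicke states form a canonical basis: `E_j` and `F_j`
act as ladder operators with coefficients `√([k_{j+1}+1]_q [k_j]_q)`, and
`q^{𝓔_i}`, `q^{H_j} = q^{𝓔_j}(q^{𝓔_{j+1}})⁻¹` act diagonally with eigenvalues
`q^{k_i}` and `q^{k_j − k_{j+1}}`. -/
theorem stmt10 (n N : ℕ) (hn : 2 ≤ n) (hN : 2 ≤ N) (q : ℝ) (hq : 0 < q) (hq1 : q ≠ 1)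
    (k : Fin n → ℕ) (hk : ∑ i, k i = N) :
    (∀ (j : ℕ) (hj : j + 1 < n), 1 ≤ k ⟨j, Nat.lt_of_succ_lt hj⟩ →
      ((Eop n N q j hj).mulVec (hatb n N q k) =
        ((Real.sqrt (qnum q (k ⟨j + 1, hj⟩ + 1) * qnum q (k ⟨j, Nat.lt_of_succ_lt hj⟩)) : ℝ) : ℂ) •
          hatb n N q
            (Function.update (Function.update k ⟨j, Nat.lt_of_succ_lt hj⟩
                (k ⟨j, Nat.lt_of_succ_lt hj⟩ - 1)) ⟨j + 1, hj⟩ (k ⟨j + 1, hj⟩ + 1))) ∧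
      ((Fop n N q j hj).mulVec
          (hatb n N q
            (Function.update (Function.update k ⟨j, Nat.lt_of_succ_lt hj⟩
                (k ⟨j, Nat.lt_of_succ_lt hj⟩ - 1)) ⟨j + 1, hj⟩ (k ⟨j + 1, hj⟩ + 1))) =
        ((Real.sqrt (qnum q (k ⟨j + 1, hj⟩ + 1) * qnum q (k ⟨j, Nat.lt_of_succ_lt hj⟩)) : ℝ) : ℂ) •
          hatb n N q k)) ∧
    (∀ i : Fin n,
      (qEop n N q i).mulVec (hatb n N q k) = ((q : ℂ) ^ (k i)) • hatb n N q k) ∧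
    (∀ (j : ℕ) (hj : j + 1 < n),
      (qEop n N q ⟨j, Nat.lt_of_succ_lt hj⟩ * (qEop n N q ⟨j + 1, hj⟩)⁻¹).mulVec
          (hatb n N q k) =
        ((q : ℂ) ^ ((k ⟨j, Nat.lt_of_succ_lt hj⟩ : ℤ) - (k ⟨j + 1, hj⟩ : ℤ))) •
          hatb n N q k) :=
  stmt10_general n N q hq hq1 k hk

end
end

section
/- Fix integers n ≥ 2, N ≥ 2 and a real number q > 0. On (ℝⁿ)^{⊗N} let r_j act as the matrix r (r(e_x ⊗ e_y) = e_x ⊗ e_y if x = y; q⁻¹ e_y ⊗ e_x if x < y; q⁻¹ e_y ⊗ e_x + (1 − q⁻²) e_x ⊗ e_y if x > y) on factors j, j+1, and let H = Σ_{j=1}^{N−1} r_j be the U_q(gl_n)-invariant open spin chain Hamiltonian. Then for all nonnegative integers k_1,…,k_n with k_1 + ⋯ + k_n = N, the q-Dicke state b^{(0)}_{k_1…k_n} = Σ_{w ∈ W(k_1,…,k_n)} q^{inv(w)} e_{w_1} ⊗ ⋯ ⊗ e_{w_N} is an eigenvector of H with eigenvalue N − 1: H b^{(0)}_{k_1…k_n}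 = (N−1) b^{(0)}_{k_1…k_n}. -/
open Finset Matrix

noncomputable section

/-- Jimbo's `U_q(gl_n)`-invariant braid matrix `r` on `ℝⁿ ⊗ ℝⁿ`. -/
def rMatR (n : ℕ) (q : ℝ) : Matrix (Fin n × Fin n) (Fin n × Fin n) ℝ := fun out inp =>
  if inp.1 = inp.2 then (if out = inp then 1 else 0)
  else (if out = (inp.2, inp.1) then q⁻¹ else 0) +
    (if inp.2 < inp.1 ∧ out = inp then 1 - q⁻¹ ^ 2 else 0)

/-- The operator `r_j` acting as `rMatR` on tensor factors `j, j+1` (0-indexed). -/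
def ropR (n N : ℕ) (q : ℝ) (j : ℕ) : Matrix (Fin N → Fin n) (Fin N → Fin n) ℝ :=
  fun f g =>
    if hj : j + 1 < N then
      rMatR n q (f ⟨j, Nat.lt_of_succ_lt hj⟩, f ⟨j + 1, hj⟩)
          (g ⟨j, Nat.lt_of_succ_lt hj⟩, g ⟨j + 1, hj⟩) *
        (if ∀ k : Fin N, k.1 ≠ j → k.1 ≠ j + 1 → f k = g k then 1 else 0)
    else if f = g then 1 else 0

/-- The `U_q(gl_n)`-invariant open spin chain Hamiltonian `H = Σ_{j=1}^{N−1} r_j`. -/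
def HamR (n N : ℕ) (q : ℝ) : Matrix (Fin N → Fin n) (Fin N → Fin n) ℝ :=
  ∑ j ∈ Finset.range (N - 1), ropR n N q j

/-- The (unnormalized) q-Dicke state `b⁰_{k₁…k_n}` in `(ℝⁿ)^{⊗N}`. -/
def bstateR (n N : ℕ) (q : ℝ) (k : Fin n → ℕ) : (Fin N → Fin n) → ℝ :=
  ∑ w ∈ Finset.univ.filter (fun w : Fin N → Fin n => ∀ i, content w i = k i),
    (q ^ invw w) • (Pi.single w 1 : (Fin N → Fin n) → ℝ)

/-! Each `r_j` fixes the q-Dicke state, so `H` acts on it as `N - 1`. At sites `j, j+1` the row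
of `r_j` indexed by a word `f` with letters `a, b` there picks up `f` itself (weight `1`) if `a = b`,
the word `f'` with those two letters exchanged (weight `q⁻¹`) if `a < b`, and both `f'` (weight
`q⁻¹`) and `f` (weight `1 - q⁻²`) if `a > b`. Exchanging an adjacent ascent creates exactly one
inversion and keeps the content, so the coefficient of `f'` is `q` times that of `f` when `a < b`,
and `q⁻¹` times it when `a > b`; in each case the row returns the coefficient of `f`. -/

open Function

variable {n N : ℕ}

lemma rMatR_row (q : ℝ) (a b : Fin n) (x : Fin n × Fin n) :
    rMatR n q (a, b) x = if a = b then (if x = (a, a) then 1 else 0) else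
      (if x = (b, a) then q⁻¹ else 0) + (if b < a ∧ x = (a, b) then 1 - q⁻¹ ^ 2 else 0) := by
  obtain ⟨x, y⟩ := x
  unfold rMatR
  simp only [Prod.mk.injEq]
  split_ifs <;> grind

lemma sum_rMatR_mul (q : ℝ) (a b : Fin n) (φ : Fin n × Fin n → ℝ) :
    ∑ x, rMatR n q (a, b) x * φ x = if a = b then φ (a, a) else
      q⁻¹ * φ (b, a) + if b < a then (1 - q⁻¹ ^ 2) * φ (a, b) else 0 := by
  simp only [rMatR_row]
  split_ifs <;> simp [add_mul, Finset.sum_add_distrib, *]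

lemma ropR_apply (q : ℝ) {p p' : Fin N} (h : (p : ℕ) + 1 = p') (f g : Fin N → Fin n) :
    ropR n N q p f g = rMatR n q (f p, f p') (g p, g p') *
      if ∀ k, k ≠ p → k ≠ p' → f k = g k then 1 else 0 := by
  have hj : (p : ℕ) + 1 < N := h ▸ p'.isLt
  rw [ropR, dif_pos hj]
  simp only [Fin.eta, ← Fin.val_ne_iff, h]

lemma ropR_mulVec_apply (q : ℝ) {p p' : Fin N} (h : (p : ℕ) + 1 = p')
    (v : (Fin N → Fin n) → ℝ) (f : Fin N → Fin n) :
    (ropR n N q p *ᵥ v) f =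
      ∑ x : Fin n × Fin n, rMatR n q (f p, f p') x * v (update (update f p x.1) p' x.2) := by
  have hpp : p ≠ p' := fun e => by rw [e] at h; omega
  set u : Fin n × Fin n → Fin N → Fin n := fun x => update (update f p x.1) p' x.2
  have hu : ∀ x, (u x p, u x p') = x := fun x => by simp [u, hpp]
  have hu_agree : ∀ x k, k ≠ p → k ≠ p' → f k = u x k := fun x k hk hk' => by simp [u, hk, hk']
  have hinj : Injective u := fun x y e => by rw [← hu x, ← hu y, e]
  have hmem : ∀ g, (∀ k, k ≠ p → k ≠ p' → f k = g k) → g = u (g p, g p') := by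
    intro g hg
    funext k
    by_cases hk : k = p
    · subst hk; simp [u, hpp]
    by_cases hk' : k = p'
    · subst hk'; simp [u]
    simp [u, hk, hk', hg k hk hk']
  calc (ropR n N q p *ᵥ v) f = ∑ g, ropR n N q p f g * v g := rfl
    _ = ∑ g ∈ univ.image u, ropR n N q p f g * v g := by
        refine (Finset.sum_subset (subset_univ _) fun g _ hg => ?_).symm
        rw [ropR_apply q h, if_neg fun hag => hg (mem_image.2 ⟨_, mem_univ _, (hmem g hag).symm⟩)]
        simp
    _ = _ := by
        rw [Finset.sum_image fun x _ y _ e => hinj e]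
        refine Finset.sum_congr rfl fun x _ => ?_
        rw [ropR_apply q h, hu, if_pos (hu_agree x), mul_one]

lemma swap_lt_swap_of_adjacent {p p' a b : Fin N} (h : (p : ℕ) + 1 = p') (hab : a < b)
    (hne : ¬(a = p ∧ b = p')) : Equiv.swap p p' a < Equiv.swap p p' b := by
  simp only [Equiv.swap_apply_def]
  split_ifs <;> simp only [Fin.lt_def, Fin.ext_iff, not_and] at * <;> omega

lemma content_comp_perm (f : Fin N → Fin n) (e : Equiv.Perm (Fin N)) (i : Fin n) :
    content (f ∘ e) i = content f i := by
  unfold content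
  have : univ.filter (fun k => (f ∘ e) k = i) =
      (univ.filter fun k => f k = i).map e.symm.toEmbedding := by
    ext k
    simp
  rw [this, card_map]

lemma invw_comp_swap_s11 {f : Fin N → Fin n} {p p' : Fin N} (h : (p : ℕ) + 1 = p')
    (hf : f p < f p') : invw (f ∘ Equiv.swap p p') = invw f + 1 := by
  set s := Equiv.swap p p'
  set e := s.prodCongr s
  have hsymm : s.symm = s := Equiv.symm_swap p p'
  have hlt : p < p' := Fin.lt_def.2 (by omega)
  set I := univ.filter fun ab : Fin N × Fin N => ab.1 < ab.2 ∧ f ab.2 < f ab.1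
  have hnot : (p, p') ∉ I.map e.toEmbedding := by
    simp [I, e, s, not_lt.2 hlt.le]
  have key : univ.filter (fun ab : Fin N × Fin N => ab.1 < ab.2 ∧ (f ∘ s) ab.2 < (f ∘ s) ab.1)
      = (I.map e.toEmbedding).cons (p, p') hnot := by
    ext ⟨a, b⟩
    simp only [mem_filter, mem_univ, true_and, mem_cons, mem_map_equiv, Prod.mk.injEq,
      Function.comp_apply, I, e, Equiv.prodCongr_symm, Equiv.prodCongr_apply, Prod.map, hsymm]
    constructor
    · rintro ⟨hab, hinv⟩
      by_cases hc : a = p ∧ b = p'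
      · exact Or.inl hc
      · exact Or.inr ⟨swap_lt_swap_of_adjacent h hab hc, hinv⟩
    · rintro (⟨rfl, rfl⟩ | ⟨hab, hinv⟩)
      · simpa [s] using ⟨hlt, hf⟩
      · have hne : ¬(s a = p ∧ s b = p') := fun ⟨ha, hb⟩ => by
          rw [ha, hb] at hinv; exact absurd hinv (not_lt.2 hf.le)
        exact ⟨by simpa [s] using swap_lt_swap_of_adjacent h hab hne, hinv⟩
  unfold invw
  rw [key, card_cons, card_map]

lemma bstateR_apply (q : ℝ) (k : Fin n → ℕ) (f : Fin N → Fin n) :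
    bstateR n N q k f = if ∀ i, content f i = k i then q ^ invw f else 0 := by
  simp only [bstateR, Finset.sum_apply, Pi.smul_apply, Pi.single_apply, smul_eq_mul, mul_ite,
    mul_one, mul_zero, Finset.sum_ite_eq, mem_filter, mem_univ, true_and]

lemma bstateR_comp_swap (q : ℝ) (k : Fin n → ℕ) {f : Fin N → Fin n} {p p' : Fin N}
    (h : (p : ℕ) + 1 = p') (hf : f p < f p') :
    bstateR n N q k (f ∘ Equiv.swap p p') = q * bstateR n N q k f := by
  simp only [bstateR_apply, content_comp_perm, invw_comp_swap_s11 h hf]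
  split_ifs <;> ring

lemma ropR_mulVec_bstateR {q : ℝ} (hq : q ≠ 0) (k : Fin n → ℕ) {j : ℕ} (hj : j + 1 < N) :
    ropR n N q j *ᵥ bstateR n N q k = bstateR n N q k := by
  set p : Fin N := ⟨j, by omega⟩
  set p' : Fin N := ⟨j + 1, hj⟩
  funext f
  have hswap : update (update f p (f p')) p' (f p) = f ∘ Equiv.swap p p' := by
    rw [Equiv.swap_comm, Equiv.comp_swap_eq_update]
  rw [ropR_mulVec_apply (p := p) (p' := p') q rfl, sum_rMatR_mul]
  simp only [hswap, update_eq_self]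
  rcases lt_trichotomy (f p) (f p') with hlt | heq | hgt
  · rw [if_neg hlt.ne, if_neg hlt.not_gt, bstateR_comp_swap q k rfl hlt, add_zero]
    field_simp
  · rw [if_pos heq, heq, update_eq_self]
  · have hback := bstateR_comp_swap q k (f := f ∘ Equiv.swap p p') (p := p) (p' := p') rfl
      (by simpa using hgt)
    have hinvol : (f ∘ Equiv.swap p p') ∘ Equiv.swap p p' = f :=
      funext fun x => congrArg f (Equiv.swap_apply_self p p' x)
    rw [hinvol] at hback
    rw [if_neg hgt.ne', if_pos hgt, hback]
    field_simp
    ring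

theorem stmt11_general (n N : ℕ) (hN : 2 ≤ N) (q : ℝ) (hq : 0 < q)
    (k : Fin n → ℕ) :
    (HamR n N q).mulVec (bstateR n N q k) = ((N : ℝ) - 1) • bstateR n N q k := by
  have hr : ∀ j ∈ range (N - 1), ropR n N q j *ᵥ bstateR n N q k = bstateR n N q k :=
    fun j hj => ropR_mulVec_bstateR hq.ne' k (by rw [mem_range] at hj; omega)
  rw [HamR, Matrix.sum_mulVec, Finset.sum_congr rfl hr, sum_const, card_range,
    ← Nat.cast_smul_eq_nsmul ℝ, Nat.cast_pred (by omega)]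

/-- every q-Dicke state `b⁰_{k₁…k_n}` is an eigenvector of the
`U_q(gl_n)`-invariant open spin chain Hamiltonian `H = Σ_j r_j` with eigenvalue `N − 1`. -/
theorem stmt11 (n N : ℕ) (hn : 2 ≤ n) (hN : 2 ≤ N) (q : ℝ) (hq : 0 < q)
    (k : Fin n → ℕ) (hk : ∑ i, k i = N) :
    (HamR n N q).mulVec (bstateR n N q k) = ((N : ℝ) - 1) • bstateR n N q k :=
  stmt11_general n N hN q hq k

end
end

section
/- Let n be an odd prime, V = ℂ^{ℤ_n}, and r ∈ End(V ⊗ V) the dihedral quandle braid matrix r(e_a ⊗ e_b) = e_b ⊗ e_{2b−a} (arithmetic mod n). Let ω = e^{2πi/n}. Then V ⊗ V decomposes as the orthogonal direct sum of the eigenspaces of r: V ⊗ V = ⊕_{k=1}^{n} V^{(ω^k)}, where for k = 1,…,n−1 the eigenspace V^{(ω^k)} of the eigenvalue ω^k has dimension n − 1, and the eigenspace V^{(1)} of the eigenvalue 1 has dimension 2n − 1. Explicitly, for each k the vectors G_k(e_0 ⊗ e_m), m = 1,…,n−1, with G_k = (1/√n) Σ_{j=0}^{n−1} ω^{−kj}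 r^j, are an orthonormal basis of V^{(ω^k)} for k ≠ n, while V^{(1)} has orthonormal basis {G_n(e_0 ⊗ e_m) : m = 1,…,n−1} ∪ {e_m ⊗ e_m : m ∈ ℤ_n}. -/
open Finset Matrix Complex

noncomputable section

/-- The linearization of the dihedral quandle braid solution:
`r(e_a ⊗ e_b) = e_b ⊗ e_{2b−a}`, arithmetic mod `n`. -/
def rdq (n : ℕ) : Matrix (ZMod n × ZMod n) (ZMod n × ZMod n) ℂ := fun out inp =>
  if out = (inp.2, 2 * inp.2 - inp.1) then 1 else 0

/-- `ω = e^{2πi/n}`. -/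
def dqω (n : ℕ) : ℂ := Complex.exp (2 * Real.pi * Complex.I / n)

/-- The generator `G_k = (1/√n) Σ_{j<n} ω^{−kj} r^j`. -/
def Gop (n : ℕ) [NeZero n] (k : ℕ) : Matrix (ZMod n × ZMod n) (ZMod n × ZMod n) ℂ :=
  ((Real.sqrt n : ℂ))⁻¹ • ∑ j ∈ Finset.range n, (dqω n) ^ (-((k * j : ℕ) : ℤ)) • rdq n ^ j

/-- The vector `G_k (e_0 ⊗ e_m)`. -/
def Gvec (n : ℕ) [NeZero n] (k : ℕ) (m : ZMod n) : ZMod n × ZMod n → ℂ :=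
  (Gop n k).mulVec (Pi.single ((0 : ZMod n), m) 1)

/-- The Hermitian dot product on `ℂ^{ZMod n × ZMod n}`. -/
def dotc {α : Type*} [Fintype α] (u v : α → ℂ) : ℂ :=
  ∑ f, (starRingEnd ℂ) (u f) * v f

/-- The claimed orthonormal basis of the eigenvalue-1 eigenspace:
the vectors `G_n (e_0 ⊗ e_m)` for `m ≠ 0` together with the diagonal vectors `e_m ⊗ e_m`. -/
def eigOneBasis (n : ℕ) [NeZero n] :
    ({m : ZMod n // m ≠ 0} ⊕ ZMod n) → (ZMod n × ZMod n → ℂ) :=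
  Sum.elim (fun m => Gvec n n m.1)
    (fun m => (Pi.single (m, m) 1 : ZMod n × ZMod n → ℂ))

/-!
`rdq` permutes the standard basis by `σ (a, b) = (b, 2b − a)`, which moves `(a, a + d)` to
`(a + d, a + 2d)`. For `n` prime the `σ`-orbit of `(0, m)`, `m ≠ 0`, is the whole line
`b − a = m`, traversed as `x ↦ (x m, (x + 1) m)`, and the diagonal is fixed pointwise. So
`G_k (e_0 ⊗ e_m) = n^{-1/2} Σ_x ω^{-kx} e_{(xm, (x+1)m)}` is a unit `ω^k`-eigenvector supported on
that line. These give `n − 1` orthonormal eigenvectors for each `ω^k ≠ 1` and, with the diagonal,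
`2n − 1` for the eigenvalue `1`: `n²` vectors in total. Eigenspaces of distinct eigenvalues are
independent, so none can be larger than these lower bounds, and they fill the space. They are
mutually orthogonal because the permutation matrix `rdq` preserves the Hermitian product.
-/

lemma eq_mul_add_one_mul_iff {F : Type*} [Field F] {m : F} (hm : m ≠ 0) (x : F) (p : F × F) :
    p = (x * m, (x + 1) * m) ↔ p.2 - p.1 = m ∧ x = p.1 / m := by
  constructor
  · rintro rfl
    exact ⟨by ring, (mul_div_cancel_right₀ x hm).symm⟩
  · rintro ⟨h, rfl⟩
    have hdiv : p.1 / m * m = p.1 := div_mul_cancel₀ _ hm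
    ext
    · exact hdiv.symm
    · rw [add_mul, hdiv]
      linear_combination h

lemma ZMod.sum_range_natCast {n : ℕ} [NeZero n] {M : Type*} [AddCommMonoid M] (f : ZMod n → M) :
    ∑ j ∈ range n, f j = ∑ x, f x :=
  Finset.sum_nbij' (↑) ZMod.val (by simp) (fun x _ => by simpa using ZMod.val_lt x)
    (fun j hj => ZMod.val_cast_of_lt (by simpa using hj)) (fun x _ => ZMod.natCast_zmod_val x)
    (fun _ _ => rfl)

section Dotc

variable {α : Type*} [Fintype α]

lemma dotc_eq_star_dotProduct (u v : α → ℂ) : dotc u v = star u ⬝ᵥ v := rfl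

lemma dotc_smul_smul (a b : ℂ) (u v : α → ℂ) :
    dotc (a • u) (b • v) = starRingEnd ℂ a * b * dotc u v := by
  simp only [dotc_eq_star_dotProduct, star_smul, smul_dotProduct, dotProduct_smul, smul_eq_mul,
    starRingEnd_apply]
  ring

theorem linearIndependent_of_dotc_eq_ite {ι : Type*} [DecidableEq ι] {v : ι → α → ℂ}
    (h : ∀ i j, dotc (v i) (v j) = if i = j then 1 else 0) : LinearIndependent ℂ v := by
  rw [linearIndependent_iff']
  intro s g hs i hi
  have := congrArg (dotc (v i)) hs
  simp only [dotc_eq_star_dotProduct] at h this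
  simpa [dotProduct_sum, dotProduct_smul, h, hi] using this

open ComplexOrder in
theorem dotc_eq_zero_of_mem_eigenspace {f : Module.End ℂ (α → ℂ)}
    (hf : ∀ u v, dotc (f u) (f v) = dotc u v) {μ ν : ℂ} (hμν : μ ≠ ν) {u w : α → ℂ}
    (hu : u ∈ f.eigenspace μ) (hw : w ∈ f.eigenspace ν) : dotc u w = 0 := by
  rw [Module.End.mem_eigenspace_iff] at hu hw
  by_contra huw
  have huu : dotc u u ≠ 0 := by
    intro h
    rw [dotc_eq_star_dotProduct, dotProduct_star_self_eq_zero] at h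
    simp [h, dotc] at huw
  have hμμ : starRingEnd ℂ μ * μ = 1 := by
    rw [← mul_eq_right₀ huu, ← dotc_smul_smul, ← hu, hf]
  have hμν' : starRingEnd ℂ μ * ν = 1 := by
    rw [← mul_eq_right₀ huw, ← dotc_smul_smul, ← hu, ← hw, hf]
  have hμ0 : starRingEnd ℂ μ ≠ 0 := left_ne_zero_of_mul_eq_one hμμ
  exact hμν (mul_left_cancel₀ hμ0 (hμμ.trans hμν'.symm))

end Dotc

section FinrankIndep

variable {K V : Type*} [DivisionRing K] [AddCommGroup V] [Module K V] [FiniteDimensional K V]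

theorem iSupIndep.finrank_biSup {ι : Type*} {W : ι → Submodule K V} (hW : iSupIndep W)
    (s : Finset ι) : Module.finrank K ↥(⨆ i ∈ s, W i) = ∑ i ∈ s, Module.finrank K (W i) := by
  classical
  induction s using Finset.induction_on with
  | empty => simp
  | insert a s ha ih =>
    have hdisj : W a ⊓ ⨆ i ∈ s, W i = ⊥ := (hW.disjoint_biSup (y := ↑s) ha).eq_bot
    rw [Finset.iSup_insert, Finset.sum_insert ha, ← ih,
      ← Submodule.finrank_sup_add_finrank_inf_eq, hdisj, finrank_bot, add_zero]

theorem iSupIndep.finrank_eq_and_biSup_eq_top {ι ι' : Type*} {W : ι' → Submodule K V}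
    (hW : iSupIndep W) {g : ι → ι'} {s : Finset ι} (hg : Set.InjOn g s) {d : ι → ℕ}
    (hd : ∀ i ∈ s, d i ≤ Module.finrank K (W (g i)))
    (hsum : ∑ i ∈ s, d i = Module.finrank K V) :
    (∀ i ∈ s, Module.finrank K (W (g i)) = d i) ∧ ⨆ i ∈ s, W (g i) = ⊤ := by
  classical
  have hrank : Module.finrank K ↥(⨆ i ∈ s, W (g i)) = ∑ i ∈ s, Module.finrank K (W (g i)) := by
    rw [← Finset.iSup_finset_image, hW.finrank_biSup, Finset.sum_image hg]
  have heq : ∀ i ∈ s, d i = Module.finrank K (W (g i)) := by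
    refine (Finset.sum_eq_sum_iff_of_le hd).1 (le_antisymm (Finset.sum_le_sum hd) ?_)
    rw [hsum, ← hrank]
    exact Submodule.finrank_le _
  refine ⟨fun i hi => (heq i hi).symm, Submodule.eq_top_of_finrank_eq ?_⟩
  rw [hrank, ← hsum]
  exact Finset.sum_congr rfl fun i hi => (heq i hi).symm

end FinrankIndep

namespace DihedralQuandle

open Module.End

def dihedralPerm (n : ℕ) : Equiv.Perm (ZMod n × ZMod n) where
  toFun p := (p.2, 2 * p.2 - p.1)
  invFun p := (2 * p.1 - p.2, p.1)
  left_inv p := by ext <;> simp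
  right_inv p := by ext <;> simp

@[simp]
lemma dihedralPerm_apply {n : ℕ} (p : ZMod n × ZMod n) :
    dihedralPerm n p = (p.2, 2 * p.2 - p.1) := rfl

@[simp]
lemma dihedralPerm_symm_apply {n : ℕ} (p : ZMod n × ZMod n) :
    (dihedralPerm n).symm p = (2 * p.1 - p.2, p.1) := rfl

lemma dihedralPerm_pow_apply {n : ℕ} (j : ℕ) (m : ZMod n) :
    (dihedralPerm n ^ j) (0, m) = ((j : ZMod n) * m, ((j : ZMod n) + 1) * m) := by
  induction j with
  | zero => simp
  | succ j ih =>
    rw [pow_succ', Equiv.Perm.mul_apply, ih]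
    ext <;> simp only [dihedralPerm_apply, Nat.cast_add, Nat.cast_one]
    ring

lemma rdq_eq_toMatrix {n : ℕ} : rdq n = (dihedralPerm n).symm.toPEquiv.toMatrix := by
  ext out inp
  simp only [rdq, PEquiv.toMatrix_apply, Equiv.toPEquiv_apply, Option.mem_def,
    Option.some.injEq, Equiv.symm_apply_eq]
  rfl

variable {n : ℕ} [NeZero n]

lemma rdq_mulVec (v : ZMod n × ZMod n → ℂ) : rdq n *ᵥ v = v ∘ (dihedralPerm n).symm := by
  rw [rdq_eq_toMatrix, PEquiv.toMatrix_toPEquiv_mulVec]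

lemma mem_eigenspace_rdq_iff {μ : ℂ} {u : ZMod n × ZMod n → ℂ} :
    u ∈ eigenspace (rdq n).mulVecLin μ ↔ rdq n *ᵥ u = μ • u := by
  rw [mem_eigenspace_iff, mulVecLin_apply]

lemma dotc_rdq_mulVec (u v : ZMod n × ZMod n → ℂ) :
    dotc (rdq n *ᵥ u) (rdq n *ᵥ v) = dotc u v := by
  rw [dotc_eq_star_dotProduct, rdq_mulVec, rdq_mulVec]
  exact comp_equiv_dotProduct_comp_equiv (star u) v _

lemma rdq_mulVec_single (p : ZMod n × ZMod n) :
    rdq n *ᵥ Pi.single p 1 = Pi.single (dihedralPerm n p) 1 := by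
  ext q
  simp only [rdq_mulVec, Function.comp_apply, Pi.single_apply, Equiv.symm_apply_eq]

lemma rdq_mulVec_single_diag (a : ZMod n) :
    rdq n *ᵥ Pi.single (a, a) 1 = Pi.single (a, a) 1 := by
  rw [rdq_mulVec_single, dihedralPerm_apply, two_mul, add_sub_cancel_right]

lemma rdq_pow_mulVec_single (j : ℕ) (p : ZMod n × ZMod n) :
    rdq n ^ j *ᵥ Pi.single p 1 = Pi.single ((dihedralPerm n ^ j) p) 1 := by
  induction j with
  | zero => rw [pow_zero, pow_zero, one_mulVec]; rfl
  | succ j ih =>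
    rw [pow_succ', ← mulVec_mulVec, ih, rdq_mulVec_single, pow_succ', Equiv.Perm.mul_apply]

lemma isPrimitiveRoot_dqω : IsPrimitiveRoot (dqω n) n :=
  Complex.isPrimitiveRoot_exp n (NeZero.ne n)

lemma stdAddChar_natCast (k : ℕ) : ZMod.stdAddChar (k : ZMod n) = dqω n ^ k := by
  rw [← Int.cast_natCast, ZMod.stdAddChar_coe, dqω, ← Complex.exp_nat_mul]
  congr 1
  push_cast
  ring

lemma dqω_zpow_neg_natCast_mul (k j : ℕ) :
    dqω n ^ (-((k * j : ℕ) : ℤ)) = ZMod.stdAddChar (-((k : ZMod n) * (j : ZMod n))) := by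
  rw [AddChar.map_neg_eq_inv, ← Nat.cast_mul, stdAddChar_natCast, _root_.zpow_neg, zpow_natCast]

lemma Gvec_eq_sum (k : ℕ) (m : ZMod n) :
    Gvec n k m = ((Real.sqrt n : ℂ))⁻¹ • ∑ x : ZMod n,
      ZMod.stdAddChar (-((k : ZMod n) * x)) • Pi.single (x * m, (x + 1) * m) (1 : ℂ) := by
  rw [Gvec, Gop, smul_mulVec, sum_mulVec, ← ZMod.sum_range_natCast]
  congr 1
  refine Finset.sum_congr rfl fun j _ => ?_
  rw [smul_mulVec, rdq_pow_mulVec_single, dihedralPerm_pow_apply, dqω_zpow_neg_natCast_mul]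

lemma card_subtype_ne_zero : Fintype.card {m : ZMod n // m ≠ 0} = n - 1 := by
  rw [Fintype.card_subtype_compl, Fintype.card_subtype_eq, ZMod.card]

variable [Fact n.Prime]

lemma Gvec_apply (k : ℕ) {m : ZMod n} (hm : m ≠ 0) (p : ZMod n × ZMod n) :
    Gvec n k m p = if p.2 - p.1 = m
      then ((Real.sqrt n : ℂ))⁻¹ * ZMod.stdAddChar (-((k : ZMod n) * (p.1 / m))) else 0 := by
  simp only [Gvec_eq_sum, Pi.smul_apply, Finset.sum_apply, Pi.single_apply, smul_eq_mul,
    mul_ite, mul_one, mul_zero, eq_mul_add_one_mul_iff hm, ite_and]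
  split_ifs <;> simp

lemma Gvec_apply_diag (k : ℕ) {m : ZMod n} (hm : m ≠ 0) (a : ZMod n) : Gvec n k m (a, a) = 0 := by
  rw [Gvec_apply k hm, sub_self, if_neg hm.symm]

lemma rdq_mulVec_Gvec (k : ℕ) {m : ZMod n} (hm : m ≠ 0) :
    rdq n *ᵥ Gvec n k m = dqω n ^ k • Gvec n k m := by
  ext p
  have hdiff : p.1 - (2 * p.1 - p.2) = p.2 - p.1 := by ring
  simp only [rdq_mulVec, Function.comp_apply, dihedralPerm_symm_apply, Pi.smul_apply, smul_eq_mul,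
    Gvec_apply k hm, hdiff]
  split_ifs with h
  · have harg : -((k : ZMod n) * ((2 * p.1 - p.2) / m)) = -(k * (p.1 / m)) + k := by
      rw [show 2 * p.1 - p.2 = p.1 - m by rw [← h]; ring, sub_div, div_self hm]
      ring
    rw [harg, AddChar.map_add_eq_mul, stdAddChar_natCast]
    ring
  · simp

lemma conj_Gvec_mul_Gvec (k : ℕ) {m : ZMod n} (hm : m ≠ 0) (p : ZMod n × ZMod n) :
    starRingEnd ℂ (Gvec n k m p) * Gvec n k m p = if p.2 - p.1 = m then (n : ℂ)⁻¹ else 0 := by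
  rw [Gvec_apply k hm]
  split_ifs
  · rw [map_mul, map_inv₀, Complex.conj_ofReal, ← AddChar.map_neg_eq_conj, mul_mul_mul_comm,
      ← AddChar.map_add_eq_mul, neg_add_cancel, AddChar.map_zero_eq_one, mul_one, ← mul_inv,
      ← Complex.ofReal_mul, Real.mul_self_sqrt (Nat.cast_nonneg n), Complex.ofReal_natCast]
  · simp

lemma dotc_Gvec_Gvec (k : ℕ) {m m' : ZMod n} (hm : m ≠ 0) (hm' : m' ≠ 0) :
    dotc (Gvec n k m) (Gvec n k m') = if m = m' then 1 else 0 := by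
  split_ifs with hmm
  · subst hmm
    simp only [dotc, conj_Gvec_mul_Gvec k hm, Fintype.sum_prod_type, sub_eq_iff_eq_add,
      Finset.sum_ite_eq', Finset.mem_univ, if_true, Finset.sum_const, Finset.card_univ, ZMod.card,
      nsmul_eq_mul]
    exact mul_inv_cancel₀ (Nat.cast_ne_zero.2 (NeZero.ne n))
  · refine Finset.sum_eq_zero fun p _ => ?_
    rw [Gvec_apply k hm, Gvec_apply k hm']
    split_ifs with h h' <;> simp_all

lemma dotc_eigOneBasis (i i' : {m : ZMod n // m ≠ 0} ⊕ ZMod n) :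
    dotc (eigOneBasis n i) (eigOneBasis n i') = if i = i' then 1 else 0 := by
  rcases i with m | a <;> rcases i' with m' | a'
  · simp [eigOneBasis, dotc_Gvec_Gvec _ m.2 m'.2, Subtype.ext_iff]
  · simp [eigOneBasis, dotc_eq_star_dotProduct, Gvec_apply_diag _ m.2]
  · simp [eigOneBasis, dotc_eq_star_dotProduct, Gvec_apply_diag _ m'.2]
  · simp [eigOneBasis, dotc_eq_star_dotProduct, Pi.single_apply, eq_comm]

lemma span_Gvec_le_eigenspace (k : ℕ) :
    Submodule.span ℂ (Set.range fun m : {m : ZMod n // m ≠ 0} => Gvec n k m) ≤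
      eigenspace (rdq n).mulVecLin (dqω n ^ k) := by
  rw [Submodule.span_le]
  rintro _ ⟨m, rfl⟩
  exact mem_eigenspace_rdq_iff.2 (rdq_mulVec_Gvec k m.2)

lemma span_eigOneBasis_le_eigenspace_one :
    Submodule.span ℂ (Set.range (eigOneBasis n)) ≤ eigenspace (rdq n).mulVecLin 1 := by
  rw [Submodule.span_le]
  rintro _ ⟨m | a, rfl⟩
  · rw [← (isPrimitiveRoot_dqω (n := n)).pow_eq_one]
    exact mem_eigenspace_rdq_iff.2 (rdq_mulVec_Gvec n m.2)
  · rw [eigOneBasis, Sum.elim_inr, SetLike.mem_coe, mem_eigenspace_rdq_iff, one_smul]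
    exact rdq_mulVec_single_diag a

lemma finrank_span_Gvec (k : ℕ) :
    Module.finrank ℂ (Submodule.span ℂ (Set.range fun m : {m : ZMod n // m ≠ 0} => Gvec n k m)) =
      n - 1 := by
  rw [finrank_span_eq_card (linearIndependent_of_dotc_eq_ite fun i j => ?_), card_subtype_ne_zero]
  simp [dotc_Gvec_Gvec k i.2 j.2, Subtype.ext_iff]

lemma finrank_span_eigOneBasis :
    Module.finrank ℂ (Submodule.span ℂ (Set.range (eigOneBasis n))) = 2 * n - 1 := by
  rw [finrank_span_eq_card (linearIndependent_of_dotc_eq_ite dotc_eigOneBasis), Fintype.card_sum,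
    card_subtype_ne_zero, ZMod.card]
  have := NeZero.pos n
  omega

theorem finrank_eigenspace_and_iSup_eq_top :
    (∀ k ∈ range n, Module.finrank ℂ (eigenspace (rdq n).mulVecLin (dqω n ^ k)) =
      if k = 0 then 2 * n - 1 else n - 1) ∧
    ⨆ k ∈ range n, eigenspace (rdq n).mulVecLin (dqω n ^ k) = ⊤ := by
  refine (eigenspaces_iSupIndep _).finrank_eq_and_biSup_eq_top
    (fun i hi j hj h => isPrimitiveRoot_dqω.pow_inj (mem_range.1 hi) (mem_range.1 hj) h)
    (fun k _ => ?_) ?_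
  · split_ifs with hk
    · rw [hk, pow_zero, ← finrank_span_eigOneBasis]
      exact Submodule.finrank_mono span_eigOneBasis_le_eigenspace_one
    · rw [← finrank_span_Gvec k]
      exact Submodule.finrank_mono (span_Gvec_le_eigenspace k)
  · obtain ⟨m, rfl⟩ := Nat.exists_eq_succ_of_ne_zero (NeZero.ne n)
    rw [Module.finrank_fintype_fun_eq_card, Fintype.card_prod, ZMod.card, Finset.sum_range_succ']
    simp only [Nat.add_eq_zero_iff, one_ne_zero, and_false, if_false, if_true,
      Nat.succ_eq_add_one, add_tsub_cancel_right, sum_const, card_range, smul_eq_mul]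
    rw [show 2 * (m + 1) - 1 = 2 * m + 1 by omega]
    ring

lemma eigenspace_eq_span_Gvec {k : ℕ} (hk0 : k ≠ 0) (hkn : k < n) :
    eigenspace (rdq n).mulVecLin (dqω n ^ k) =
      Submodule.span ℂ (Set.range fun m : {m : ZMod n // m ≠ 0} => Gvec n k m) := by
  refine (Submodule.eq_of_le_of_finrank_eq (span_Gvec_le_eigenspace k) ?_).symm
  rw [finrank_span_Gvec, finrank_eigenspace_and_iSup_eq_top.1 k (mem_range.2 hkn), if_neg hk0]

lemma eigenspace_one_eq_span_eigOneBasis :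
    eigenspace (rdq n).mulVecLin 1 = Submodule.span ℂ (Set.range (eigOneBasis n)) := by
  refine (Submodule.eq_of_le_of_finrank_eq span_eigOneBasis_le_eigenspace_one ?_).symm
  rw [finrank_span_eigOneBasis, ← pow_zero (dqω n),
    finrank_eigenspace_and_iSup_eq_top.1 0 (mem_range.2 (NeZero.pos n)), if_pos rfl]

end DihedralQuandle

open DihedralQuandle in
theorem stmt19_general (n : ℕ) [NeZero n] (hp : n.Prime) :
    (∀ k : ℕ, 1 ≤ k → k ≤ n - 1 →
      Module.finrank ℂ
          (Module.End.eigenspace ((rdq n).mulVecLin) ((dqω n) ^ k)) = n - 1 ∧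
      (∀ m m' : ZMod n, m ≠ 0 → m' ≠ 0 →
        dotc (Gvec n k m) (Gvec n k m') = if m = m' then 1 else 0) ∧
      Module.End.eigenspace ((rdq n).mulVecLin) ((dqω n) ^ k) =
        Submodule.span ℂ (Set.range fun m : {m : ZMod n // m ≠ 0} => Gvec n k m.1)) ∧
    (Module.finrank ℂ (Module.End.eigenspace ((rdq n).mulVecLin) 1) = 2 * n - 1) ∧
    (∀ i i' : ({m : ZMod n // m ≠ 0} ⊕ ZMod n),
      dotc (eigOneBasis n i) (eigOneBasis n i') = if i = i' then 1 else 0) ∧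
    (Module.End.eigenspace ((rdq n).mulVecLin) 1 =
      Submodule.span ℂ (Set.range (eigOneBasis n))) ∧
    ((⨆ k ∈ Finset.range n,
        Module.End.eigenspace ((rdq n).mulVecLin) ((dqω n) ^ k)) = ⊤) ∧
    (∀ k k' : ℕ, k < n → k' < n → k ≠ k' →
      ∀ u ∈ Module.End.eigenspace ((rdq n).mulVecLin) ((dqω n) ^ k),
      ∀ w ∈ Module.End.eigenspace ((rdq n).mulVecLin) ((dqω n) ^ k'),
        dotc u w = 0) := by
  have : Fact n.Prime := ⟨hp⟩
  obtain ⟨hfinrank, hiSup⟩ := finrank_eigenspace_and_iSup_eq_top (n := n)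
  refine ⟨fun k hk1 hk2 => ⟨?_, fun m m' hm hm' => dotc_Gvec_Gvec k hm hm',
    eigenspace_eq_span_Gvec (by omega) (by omega)⟩, ?_, dotc_eigOneBasis,
    eigenspace_one_eq_span_eigOneBasis, hiSup, ?_⟩
  · rw [hfinrank k (mem_range.2 (by omega)), if_neg (by omega)]
  · rw [← pow_zero (dqω n), hfinrank 0 (mem_range.2 (NeZero.pos n)), if_pos rfl]
  · intro k k' hk hk' hkk' u hu w hw
    refine dotc_eq_zero_of_mem_eigenspace (fun u v => ?_)
      (fun h => hkk' (isPrimitiveRoot_dqω.pow_inj hk hk' h)) hu hw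
    rw [mulVecLin_apply, mulVecLin_apply, dotc_rdq_mulVec]

/-- for `n` an odd prime, `V ⊗ V` decomposes as the orthogonal direct sum
of the eigenspaces of the dihedral quandle braid matrix `r`: the eigenspace of `ω^k`
(`1 ≤ k ≤ n−1`) has dimension `n − 1` with orthonormal basis `G_k(e_0 ⊗ e_m)`, `m ≠ 0`,
while the eigenspace of `1` has dimension `2n − 1` with orthonormal basis
`{G_n(e_0 ⊗ e_m) : m ≠ 0} ∪ {e_m ⊗ e_m}`. -/
theorem stmt19 (n : ℕ) [NeZero n] (hp : n.Prime) (hodd : Odd n) :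
    (∀ k : ℕ, 1 ≤ k → k ≤ n - 1 →
      Module.finrank ℂ
          (Module.End.eigenspace ((rdq n).mulVecLin) ((dqω n) ^ k)) = n - 1 ∧
      (∀ m m' : ZMod n, m ≠ 0 → m' ≠ 0 →
        dotc (Gvec n k m) (Gvec n k m') = if m = m' then 1 else 0) ∧
      Module.End.eigenspace ((rdq n).mulVecLin) ((dqω n) ^ k) =
        Submodule.span ℂ (Set.range fun m : {m : ZMod n // m ≠ 0} => Gvec n k m.1)) ∧
    (Module.finrank ℂ (Module.End.eigenspace ((rdq n).mulVecLin) 1) = 2 * n - 1) ∧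
    (∀ i i' : ({m : ZMod n // m ≠ 0} ⊕ ZMod n),
      dotc (eigOneBasis n i) (eigOneBasis n i') = if i = i' then 1 else 0) ∧
    (Module.End.eigenspace ((rdq n).mulVecLin) 1 =
      Submodule.span ℂ (Set.range (eigOneBasis n))) ∧
    ((⨆ k ∈ Finset.range n,
        Module.End.eigenspace ((rdq n).mulVecLin) ((dqω n) ^ k)) = ⊤) ∧
    (∀ k k' : ℕ, k < n → k' < n → k ≠ k' →
      ∀ u ∈ Module.End.eigenspace ((rdq n).mulVecLin) ((dqω n) ^ k),
      ∀ w ∈ Module.End.eigenspace ((rdq n).mulVecLin) ((dqω n) ^ k'),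
        dotc u w = 0) :=
  stmt19_general n hp
end
end
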